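/- arXiv:1207.2128 — 8 statements merged into one kernel-verified Lean document; each statement's English description precedes it below -/
import Mathlib

section
/- Let κ be an uncountable regular cardinal with κ^{<κ} = κ. Let D be a co-meager subset of 2^κ (the space of functions κ → 2 with the bounded topology, generated by basic open sets N_p = {η : η↾α = p} for p : α → 2, α < κ; co-meager means containing an intersection of at most κ many dense open sets). Then for any α < κ and any p, q : α → 2, there exists η : [α, κ) → 2 such that both the concatenation p⌢η and q⌢η belong to D. -/
open Cardinal Set
open scoped Classical

noncomputable section

/-- The bounded topology on the generalized Cantor space `2^κ` (functions `Ordinal → X`,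
where only values below `κ` matter), generated by the basic open sets
`N_p = {η | η↾α = p}` for `α < κ`. -/
def gbTop (κ : Cardinal) (X : Type*) : TopologicalSpace (Ordinal → X) :=
  TopologicalSpace.generateFrom
    {s | ∃ α < κ.ord, ∃ p : Ordinal → X, s = {η | ∀ β < α, η β = p β}}

/-- `D` is co-meager: it contains an intersection of at most `κ` many dense open sets. -/
def Comeager (κ : Cardinal) (D : Set (Ordinal → Bool)) : Prop :=
  ∃ (ι : Type) (F : ι → Set (Ordinal → Bool)),
    Cardinal.mk ι ≤ κ ∧
    (∀ i, @IsOpen _ (gbTop κ Bool) (F i) ∧ @Dense _ (gbTop κ Bool) (F i)) ∧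
    (⋂ i, F i) ⊆ D

open Topology

universe u v

/-!
The map `η ↦ q⌢(η ↾ [α, κ))` is continuous and open, so it pulls the co-meager set `D` back to
a co-meager set, and `D` intersected with this pullback is still co-meager. By the Baire
category theorem for `2^κ` (regularity of `κ` lets a fusion of fewer than `κ` conditions
stay a condition), that intersection meets the basic open set `N_p` in some `ξ`, and `η = ξ`
works since `p⌢ξ = ξ`.
-/

section TransfiniteChain

variable {α : Type*} [Preorder α] [Nonempty α]

/-- A junk value at any stage where no `x` of the required kind exists. -/
def transfiniteChain (Q : Ordinal → α → Prop) (γ : Ordinal) : α :=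
  Classical.epsilon fun x => Q γ x ∧ ∀ δ (_ : δ < γ), transfiniteChain Q δ ≤ x
termination_by γ

theorem transfiniteChain_spec {Q : Ordinal → α → Prop} {o : Ordinal}
    (step : ∀ γ < o, ∀ f : Ordinal → α, (∀ δ < γ, Q δ (f δ) ∧ ∀ δ' < δ, f δ' ≤ f δ) →
      ∃ x, Q γ x ∧ ∀ δ < γ, f δ ≤ x) :
    ∀ γ < o, Q γ (transfiniteChain Q γ) ∧ ∀ δ < γ, transfiniteChain Q δ ≤ transfiniteChain Q γ := by
  intro γ
  induction γ using WellFoundedLT.induction with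
  | _ γ ih =>
    intro hγ
    rw [transfiniteChain]
    exact Classical.epsilon_spec (step γ hγ _ fun δ hδ => ih δ hδ (hδ.trans hγ))

end TransfiniteChain

theorem Cardinal.IsRegular.exists_lt_ord_forall_le {κ : Cardinal.{u}} (hκ : κ.IsRegular)
    {γ : Ordinal.{u}} (hγ : γ < κ.ord) {f : Ordinal.{u} → Ordinal.{u}}
    (hf : ∀ δ < γ, f δ < κ.ord) : ∃ L < κ.ord, ∀ δ < γ, f δ ≤ L := by
  refine ⟨⨆ δ : Iio γ, f δ, Ordinal.lift_iSup_lt_of_lt_cof ?_ fun δ => hf δ δ.2,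
    fun δ hδ => Ordinal.le_iSup (fun δ : Iio γ => f δ) ⟨δ, hδ⟩⟩
  simpa [mk_Iio_ordinal, ← Ordinal.lift_card, ← lift_ord, ← Ordinal.lift_cof, hκ.cof_ord] using
    lt_ord.mp hγ

/-- A condition `x` codes the basic open set `N_{x.val ↾ x.len}`; `x ≤ y` means that `y`
lengthens `x`, so that `N_y ⊆ N_x`. -/
structure Condition (X : Type v) where
  len : Ordinal.{u}
  val : Ordinal.{u} → X

namespace Condition

variable {X : Type v}

instance : Preorder (Condition.{u} X) where
  le x y := x.len ≤ y.len ∧ ∀ β < x.len, y.val β = x.val β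
  le_refl _ := ⟨le_rfl, fun _ _ => rfl⟩
  le_trans _ _ _ hxy hyz :=
    ⟨hxy.1.trans hyz.1, fun β hβ => (hyz.2 β (hβ.trans_le hxy.1)).trans (hxy.2 β hβ)⟩

def nbhd (x : Condition.{u} X) : Set (Ordinal.{u} → X) := {η | ∀ β < x.len, η β = x.val β}

theorem val_mem_nbhd (x : Condition.{u} X) : x.val ∈ x.nbhd := fun _ _ => rfl

theorem nbhd_anti {x y : Condition.{u} X} (h : x ≤ y) : y.nbhd ⊆ x.nbhd :=
  fun _ hη β hβ => (hη β (hβ.trans_le h.1)).trans (h.2 β hβ)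

theorem exists_len_eq_forall_le (x₀ : Condition.{u} X) {γ : Ordinal.{u}}
    {f : Ordinal.{u} → Condition.{u} X}
    (hx₀ : ∀ δ < γ, x₀ ≤ f δ) (hf : ∀ δ < γ, ∀ δ' < δ, f δ' ≤ f δ) {L : Ordinal.{u}}
    (hL₀ : x₀.len ≤ L) (hL : ∀ δ < γ, (f δ).len ≤ L) :
    ∃ y : Condition.{u} X, y.len = L ∧ x₀ ≤ y ∧ ∀ δ < γ, f δ ≤ y := by
  set y : Condition.{u} X := ⟨L, fun β =>
    if h : ∃ δ < γ, β < (f δ).len then (f h.choose).val β else x₀.val β⟩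
  have hy : ∀ δ < γ, ∀ β < (f δ).len, y.val β = (f δ).val β := by
    intro δ hδ β hβ
    have h : ∃ δ < γ, β < (f δ).len := ⟨δ, hδ, hβ⟩
    obtain ⟨hδ', hβ'⟩ := h.choose_spec
    simp only [y, dif_pos h]
    rcases lt_trichotomy h.choose δ with hlt | heq | hgt
    · exact ((hf δ hδ _ hlt).2 β hβ').symm
    · rw [heq]
    · exact (hf _ hδ' δ hgt).2 β hβ
  refine ⟨y, rfl, ⟨hL₀, fun β hβ => ?_⟩, fun δ hδ => ⟨hL δ hδ, hy δ hδ⟩⟩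
  by_cases h : ∃ δ < γ, β < (f δ).len
  · obtain ⟨δ, hδ, hβδ⟩ := h
    exact (hy δ hδ β hβδ).trans ((hx₀ δ hδ).2 β hβ)
  · simp only [y, dif_neg h]

end Condition

section GeneralizedCantorSpace

variable {X : Type v} {κ : Cardinal.{u}}

theorem Condition.isOpen_nbhd {x : Condition.{u} X} (hx : x.len < κ.ord) :
    IsOpen[gbTop κ X] x.nbhd :=
  TopologicalSpace.isOpen_generateFrom_of_mem ⟨x.len, hx, x.val, rfl⟩

theorem isOpen_gbTop_of_forall_nbhd_subset {U : Set (Ordinal.{u} → X)}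
    (hU : ∀ η ∈ U, ∃ b < κ.ord, (⟨b, η⟩ : Condition X).nbhd ⊆ U) : IsOpen[gbTop κ X] U := by
  let := gbTop κ X
  refine isOpen_iff_forall_mem_open.2 fun η hη => ?_
  obtain ⟨b, hb, hbU⟩ := hU η hη
  exact ⟨_, hbU, Condition.isOpen_nbhd hb, Condition.val_mem_nbhd _⟩

theorem exists_nbhd_subset_of_isOpen_gbTop {U : Set (Ordinal.{u} → X)}
    (hU : IsOpen[gbTop κ X] U) {η : Ordinal.{u} → X} (hη : η ∈ U) {b : Ordinal.{u}}
    (hb : b < κ.ord) : ∃ b' < κ.ord, b ≤ b' ∧ (⟨b', η⟩ : Condition X).nbhd ⊆ U := by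
  induction hU generalizing b with
  | basic s hs =>
    obtain ⟨a, ha, r, rfl⟩ := hs
    exact ⟨max b a, max_lt hb ha, le_max_left _ _,
      fun ν hν β hβ => (hν β (lt_max_of_lt_right hβ)).trans (hη β hβ)⟩
  | univ => exact ⟨b, hb, le_rfl, subset_univ _⟩
  | inter s t _ _ ihs iht =>
    obtain ⟨b₁, hb₁, hbb₁, hs⟩ := ihs hη.1 hb
    obtain ⟨b₂, hb₂, hb₁b₂, ht⟩ := iht hη.2 hb₁
    exact ⟨b₂, hb₂, hbb₁.trans hb₁b₂,
      fun ν hν => ⟨hs (Condition.nbhd_anti (x := ⟨b₁, η⟩) (y := ⟨b₂, η⟩)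
        ⟨hb₁b₂, fun _ _ => rfl⟩ hν), ht hν⟩⟩
  | sUnion T _ ih =>
    obtain ⟨t, htT, hηt⟩ := hη
    obtain ⟨b', hb', hbb', ht⟩ := ih t htT hηt hb
    exact ⟨b', hb', hbb', ht.trans (subset_sUnion_of_mem htT)⟩

theorem Dense.exists_le_nbhd_subset {F : Set (Ordinal.{u} → X)} (hFo : IsOpen[gbTop κ X] F)
    (hFd : @Dense _ (gbTop κ X) F) {x : Condition.{u} X} (hx : x.len < κ.ord) :
    ∃ y, x ≤ y ∧ y.len < κ.ord ∧ y.nbhd ⊆ F := by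
  obtain ⟨η, hηF, hηx⟩ := @Dense.exists_mem_open _ (gbTop κ X) _ hFd _
    (Condition.isOpen_nbhd hx) ⟨x.val, x.val_mem_nbhd⟩
  obtain ⟨b, hb, hxb, hbF⟩ := exists_nbhd_subset_of_isOpen_gbTop hFo hηF hx
  exact ⟨⟨b, η⟩, ⟨hxb, hηx⟩, hb, hbF⟩

theorem dense_biInter_lt_ord_gbTop (hκ : κ.IsRegular)
    {H : Ordinal.{u} → Set (Ordinal.{u} → X)} (hHo : ∀ γ < κ.ord, IsOpen[gbTop κ X] (H γ))
    (hHd : ∀ γ < κ.ord, @Dense _ (gbTop κ X) (H γ)) :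
    @Dense _ (gbTop κ X) (⋂ γ < κ.ord, H γ) := by
  let := gbTop κ X
  refine dense_iff_inter_open.2 fun U hU ⟨η, hη⟩ => ?_
  obtain ⟨b, hb, -, hbU⟩ := exists_nbhd_subset_of_isOpen_gbTop hU hη (ord_pos.2 hκ.pos)
  let x₀ : Condition.{u} X := ⟨b, η⟩
  let Q : Ordinal.{u} → Condition.{u} X → Prop :=
    fun γ x => x₀ ≤ x ∧ x.len < κ.ord ∧ x.nbhd ⊆ H γ
  have step : ∀ γ < κ.ord, ∀ f : Ordinal → Condition X,
      (∀ δ < γ, Q δ (f δ) ∧ ∀ δ' < δ, f δ' ≤ f δ) → ∃ x, Q γ x ∧ ∀ δ < γ, f δ ≤ x := by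
    intro γ hγ f hf
    obtain ⟨L, hL, hfL⟩ :=
      hκ.exists_lt_ord_forall_le hγ (f := fun δ => (f δ).len) fun δ hδ => (hf δ hδ).1.2.1
    obtain ⟨y, hyL, hx₀y, hfy⟩ := x₀.exists_len_eq_forall_le (fun δ hδ => (hf δ hδ).1.1)
      (fun δ hδ => (hf δ hδ).2) (le_max_left b L)
      fun δ hδ => (hfL δ hδ).trans (le_max_right b L)
    obtain ⟨z, hyz, hz, hzH⟩ := Dense.exists_le_nbhd_subset (hHo γ hγ) (hHd γ hγ)
      (x := y) (hyL ▸ max_lt hb hL)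
    exact ⟨z, ⟨hx₀y.trans hyz, hz, hzH⟩, fun δ hδ => (hfy δ hδ).trans hyz⟩
  have : Nonempty (Condition X) := ⟨x₀⟩
  have hc := transfiniteChain_spec step
  obtain ⟨y, -, hx₀y, hcy⟩ := x₀.exists_len_eq_forall_le (fun γ hγ => (hc γ hγ).1.1)
    (fun γ hγ => (hc γ hγ).2) hb.le fun γ hγ => (hc γ hγ).1.2.1.le
  refine ⟨y.val, hbU (Condition.nbhd_anti hx₀y y.val_mem_nbhd), mem_iInter₂.2 fun γ hγ => ?_⟩
  exact (hc γ hγ).1.2.2 (Condition.nbhd_anti (hcy γ hγ) y.val_mem_nbhd)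

theorem dense_iInter_gbTop (hκ : κ.IsRegular) {ι : Type u} (hι : #ι ≤ κ)
    {G : ι → Set (Ordinal.{u} → X)} (hGo : ∀ i, IsOpen[gbTop κ X] (G i))
    (hGd : ∀ i, @Dense _ (gbTop κ X) (G i)) : @Dense _ (gbTop κ X) (⋂ i, G i) := by
  let := gbTop κ X
  cases isEmpty_or_nonempty ι
  · simpa only [iInter_of_empty] using dense_univ
  obtain ⟨e⟩ := (le_def ι κ.ord.ToType).1 (by rwa [mk_ord_toType])
  let g : ι → Ordinal.{u} := fun i => (Ordinal.ToType.mk.symm (e i)).val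
  have hg : Function.Injective g := fun i j hij =>
    e.injective (Ordinal.ToType.mk.symm.injective (Subtype.ext hij))
  refine (dense_biInter_lt_ord_gbTop hκ (H := fun γ => G (Function.invFun g γ))
    (fun γ _ => hGo _) fun γ _ => hGd _).mono (subset_iInter fun i => ?_)
  have hgi : g i < κ.ord := (Ordinal.ToType.mk.symm (e i)).2
  calc ⋂ γ < κ.ord, G (Function.invFun g γ) ⊆ G (Function.invFun g (g i)) :=
        iInter₂_subset (g i) hgi
    _ = G i := by rw [Function.leftInverse_invFun hg i]

def concat (α : Ordinal.{u}) (p η : Ordinal.{u} → X) : Ordinal.{u} → X :=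
  fun β => if β < α then p β else η β

theorem concat_eq_self {α : Ordinal.{u}} {p η : Ordinal.{u} → X} (h : ∀ β < α, η β = p β) :
    concat α p η = η := by
  funext β
  by_cases hβ : β < α
  · simp only [concat, if_pos hβ, h β hβ]
  · simp only [concat, if_neg hβ]

theorem concat_concat (α : Ordinal.{u}) (p η μ : Ordinal.{u} → X) :
    concat α p (concat α η μ) = concat α p μ := by
  funext β
  by_cases hβ : β < α <;> simp [concat, hβ]

theorem continuous_concat (α : Ordinal.{u}) (p : Ordinal.{u} → X) :
    Continuous[gbTop κ X, gbTop κ X] (concat α p) := by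
  refine continuous_generateFrom_iff.2 ?_
  rintro _ ⟨b, hb, r, rfl⟩
  refine isOpen_gbTop_of_forall_nbhd_subset fun η hη => ⟨b, hb, fun ν hν β hβ => ?_⟩
  have hβ' := hη β hβ
  by_cases hβα : β < α
  · simpa [concat, hβα] using hβ'
  · simpa [concat, hβα, hν β hβ] using hβ'

theorem isOpenMap_concat {α : Ordinal.{u}} (hα : α < κ.ord) (p : Ordinal.{u} → X) :
    @IsOpenMap _ _ (gbTop κ X) (gbTop κ X) (concat α p) := by
  intro U hU
  refine isOpen_gbTop_of_forall_nbhd_subset ?_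
  rintro _ ⟨η, hηU, rfl⟩
  obtain ⟨b, hb, hαb, hbU⟩ := exists_nbhd_subset_of_isOpen_gbTop hU hηU hα
  refine ⟨b, hb, fun μ hμ => ⟨concat α η μ, hbU fun β hβ => ?_, ?_⟩⟩
  · by_cases hβα : β < α
    · simp only [concat, if_pos hβα]
    · simpa [concat, hβα] using hμ β hβ
  · rw [concat_concat]
    exact concat_eq_self fun β hβ => by simpa [concat, hβ] using hμ β (hβ.trans_le hαb)

end GeneralizedCantorSpace

namespace Comeager

variable {κ : Cardinal.{0}} {D E : Set (Ordinal.{0} → Bool)}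

theorem dense (hκ : κ.IsRegular) (hD : Comeager κ D) : @Dense _ (gbTop κ Bool) D := by
  let := gbTop κ Bool
  obtain ⟨ι, F, hι, hF, hFD⟩ := hD
  exact (dense_iInter_gbTop hκ hι (fun i => (hF i).1) fun i => (hF i).2).mono hFD

theorem inter (hκ : ℵ₀ ≤ κ) (hD : Comeager κ D) (hE : Comeager κ E) : Comeager κ (D ∩ E) := by
  obtain ⟨ι, F, hι, hF, hFD⟩ := hD
  obtain ⟨ι', F', hι', hF', hFE⟩ := hE
  refine ⟨ι ⊕ ι', Sum.elim F F', ?_, Sum.forall.2 ⟨hF, hF'⟩, ?_⟩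
  · simpa using add_le_of_le hκ hι hι'
  · rw [iInter_sum]
    exact inter_subset_inter hFD hFE

theorem preimage {f : (Ordinal.{0} → Bool) → Ordinal.{0} → Bool}
    (hfc : Continuous[gbTop κ Bool, gbTop κ Bool] f)
    (hfo : @IsOpenMap _ _ (gbTop κ Bool) (gbTop κ Bool) f) (hD : Comeager κ D) :
    Comeager κ (f ⁻¹' D) := by
  let := gbTop κ Bool
  obtain ⟨ι, F, hι, hF, hFD⟩ := hD
  refine ⟨ι, fun i => f ⁻¹' F i, hι,
    fun i => ⟨hfc.isOpen_preimage _ (hF i).1, (hF i).2.preimage hfo⟩, ?_⟩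
  rw [← preimage_iInter]
  exact preimage_mono hFD

end Comeager

theorem comeager_common_tail_general (κ : Cardinal) (hreg : κ.IsRegular)
    (D : Set (Ordinal → Bool)) (hD : Comeager κ D)
    (α : Ordinal) (hα : α < κ.ord) (p q : Ordinal → Bool) :
    ∃ η : Ordinal → Bool,
      (fun β => if β < α then p β else η β) ∈ D ∧
      (fun β => if β < α then q β else η β) ∈ D := by
  have hDq : Comeager κ (D ∩ concat α q ⁻¹' D) :=
    hD.inter hreg.aleph0_le (hD.preimage (continuous_concat α q) (isOpenMap_concat hα q))
  obtain ⟨ξ, ⟨hξD, hqξD⟩, hξp⟩ := @Dense.exists_mem_open _ (gbTop κ Bool) _ (hDq.dense hreg) _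
    (Condition.isOpen_nbhd (x := ⟨α, p⟩) hα) ⟨p, Condition.val_mem_nbhd _⟩
  refine ⟨ξ, ?_, hqξD⟩
  rwa [← concat_eq_self hξp] at hξD

/-- for a co-meager `D ⊆ 2^κ`, any `α < κ` and any `p, q : α → 2`, there is
`η : [α, κ) → 2` with both concatenations `p⌢η` and `q⌢η` in `D`. -/
theorem comeager_common_tail (κ : Cardinal) (hreg : κ.IsRegular) (hunc : ℵ₀ < κ)
    (hpow : κ ^< κ = κ) (D : Set (Ordinal → Bool)) (hD : Comeager κ D)
    (α : Ordinal) (hα : α < κ.ord) (p q : Ordinal → Bool) :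
    ∃ η : Ordinal → Bool,
      (fun β => if β < α then p β else η β) ∈ D ∧
      (fun β => if β < α then q β else η β) ∈ D :=
  comeager_common_tail_general κ hreg D hD α hα p q

end
end

section
/- Let κ be an uncountable regular cardinal with κ^{<κ} = κ. Let D be a co-meager subset of 2^κ and let p, q : α → 2 for some α < κ. Then there exists η : [α, κ) → 2 such that p⌢η ∈ D and q⌢(1-η) ∈ D, where (1-η)(β) = 1 - η(β) for all β ∈ [α, κ). -/
open Cardinal Set
open scoped Classical

noncomputable section

/-!
For regular `κ` the bounded topology on `2^κ` satisfies a `κ`-Baire category theorem: given at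
most `κ` dense open sets, enumerate them in order type `κ` and build a decreasing `κ`-sequence of
cylinders of length `< κ`, the `γ`-th one inside the `γ`-th dense open set. At a limit stage the
fewer than `κ` lengths are bounded below `κ` by regularity and the points glue to a point
extending all of them, so the construction goes on; gluing the whole sequence gives a point in
every set.

The map `η ↦ q⌢(1 - η)` is continuous and open, so the preimages of the dense open sets
witnessing that `D` is co-meager are again dense open. A point of `N_p` lying in all these sets
and their preimages is the required `η`.
-/

open Topology

universe u v

local notation "Dense[" t "]" => @Dense _ t

section Cylinder

variable {X : Type v}

def cylinder (x : Ordinal.{u} → X) (γ : Ordinal.{u}) : Set (Ordinal.{u} → X) :=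
  {η | ∀ β < γ, η β = x β}

theorem mem_cylinder_self (x : Ordinal.{u} → X) (γ : Ordinal.{u}) : x ∈ cylinder x γ :=
  fun _ _ => rfl

theorem cylinder_subset_cylinder {x : Ordinal.{u} → X} {γ γ' : Ordinal.{u}} (h : γ ≤ γ') :
    cylinder x γ' ⊆ cylinder x γ :=
  fun _ hy β hβ => hy β (hβ.trans_le h)

theorem cylinder_eq_of_mem {x y : Ordinal.{u} → X} {γ : Ordinal.{u}} (h : y ∈ cylinder x γ) :
    cylinder y γ = cylinder x γ := by
  ext z
  exact forall₂_congr fun β hβ => by rw [h β hβ]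

variable {κ : Cardinal.{u}}

theorem isOpen_cylinder (x : Ordinal.{u} → X) {γ : Ordinal.{u}} (hγ : γ < κ.ord) :
    IsOpen[gbTop κ X] (cylinder x γ) :=
  TopologicalSpace.GenerateOpen.basic _ ⟨γ, hγ, x, rfl⟩

theorem isOpen_of_forall_cylinder_subset {U : Set (Ordinal.{u} → X)}
    (h : ∀ x ∈ U, ∃ γ < κ.ord, cylinder x γ ⊆ U) : IsOpen[gbTop κ X] U := by
  rw [@isOpen_iff_forall_mem_open]
  intro x hx
  obtain ⟨γ, hγ, hU⟩ := h x hx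
  exact ⟨_, hU, isOpen_cylinder x hγ, mem_cylinder_self x γ⟩

theorem exists_cylinder_subset_of_isOpen (hκ : κ ≠ 0) {U : Set (Ordinal.{u} → X)}
    (hU : IsOpen[gbTop κ X] U) : ∀ x ∈ U, ∃ γ < κ.ord, cylinder x γ ⊆ U := by
  induction hU with
  | basic s hs =>
    obtain ⟨γ, hγ, y, rfl⟩ := hs
    exact fun x hx => ⟨γ, hγ, (cylinder_eq_of_mem hx).subset⟩
  | univ => exact fun x _ => ⟨0, ord_pos.2 (pos_iff_ne_zero.2 hκ), subset_univ _⟩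
  | inter s t _ _ ihs iht =>
    rintro x ⟨hxs, hxt⟩
    obtain ⟨γ, hγ, hs⟩ := ihs x hxs
    obtain ⟨γ', hγ', ht⟩ := iht x hxt
    exact ⟨max γ γ', max_lt hγ hγ', subset_inter
      ((cylinder_subset_cylinder (le_max_left _ _)).trans hs)
      ((cylinder_subset_cylinder (le_max_right _ _)).trans ht)⟩
  | sUnion S _ ih =>
    rintro x ⟨t, htS, hxt⟩
    obtain ⟨γ, hγ, ht⟩ := ih t htS x hxt
    exact ⟨γ, hγ, ht.trans (subset_sUnion_of_mem htS)⟩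

theorem dense_iff_inter_cylinder_nonempty (hκ : κ ≠ 0) {U : Set (Ordinal.{u} → X)} :
    Dense[gbTop κ X] U ↔ ∀ x, ∀ γ < κ.ord, (U ∩ cylinder x γ).Nonempty := by
  rw [@dense_iff_inter_open]
  constructor
  · intro h x γ hγ
    rw [inter_comm]
    exact h _ (isOpen_cylinder x hγ) ⟨x, mem_cylinder_self x γ⟩
  · rintro h V hV ⟨x, hx⟩
    obtain ⟨γ, hγ, hV⟩ := exists_cylinder_subset_of_isOpen hκ hV x hx
    obtain ⟨y, hyU, hy⟩ := h x γ hγ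
    exact ⟨y, hV hy, hyU⟩

theorem exists_cylinder_subset_inter (hκ : κ ≠ 0) {U : Set (Ordinal.{u} → X)}
    (hUo : IsOpen[gbTop κ X] U) (hUd : Dense[gbTop κ X] U) (x : Ordinal.{u} → X)
    {γ : Ordinal.{u}} (hγ : γ < κ.ord) :
    ∃ y, ∃ δ < κ.ord, cylinder y δ ⊆ U ∩ cylinder x γ := by
  obtain ⟨y, hyU, hyx⟩ := (dense_iff_inter_cylinder_nonempty hκ).1 hUd x γ hγ
  obtain ⟨δ, hδ, hyδ⟩ := exists_cylinder_subset_of_isOpen hκ hUo y hyU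
  refine ⟨y, max γ δ, max_lt hγ hδ, subset_inter ?_ ?_⟩
  · exact (cylinder_subset_cylinder (le_max_right _ _)).trans hyδ
  · rw [← cylinder_eq_of_mem hyx]
    exact cylinder_subset_cylinder (le_max_left _ _)

end Cylinder

section Gluing

structure Condition_s1 (X : Type v) where
  point : Ordinal.{u} → X
  len : Ordinal.{u}

variable {X : Type v}

def Condition_s1.cyl (c : Condition_s1 X) : Set (Ordinal.{u} → X) := cylinder c.point c.len

def glue (γ : Ordinal.{u}) (x₀ : Ordinal.{u} → X) (c : Ordinal.{u} → Condition_s1 X) :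
    Ordinal.{u} → X :=
  fun ε => if h : ∃ δ < γ, ε < (c δ).len then (c h.choose).point ε else x₀ ε

variable {γ α : Ordinal.{u}} {x₀ : Ordinal.{u} → X} {c : Ordinal.{u} → Condition_s1 X}

theorem glue_mem_cyl (hc : AntitoneOn (fun δ => (c δ).cyl) (Iio γ)) {δ : Ordinal.{u}}
    (hδ : δ < γ) : glue γ x₀ c ∈ (c δ).cyl := by
  intro ε hε
  have hex : ∃ δ < γ, ε < (c δ).len := ⟨δ, hδ, hε⟩
  obtain ⟨hδ', hε'⟩ := hex.choose_spec
  simp only [glue, dif_pos hex]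
  rcases le_total δ hex.choose with h | h
  · exact hc hδ hδ' h (mem_cylinder_self _ _) ε hε
  · exact (hc hδ' hδ h (mem_cylinder_self _ _) ε hε').symm

theorem glue_mem_cylinder (h : ∀ δ < γ, (c δ).cyl ⊆ cylinder x₀ α) :
    glue γ x₀ c ∈ cylinder x₀ α := by
  intro ε hε
  by_cases hex : ∃ δ < γ, ε < (c δ).len
  · simp only [glue, dif_pos hex]
    exact h _ hex.choose_spec.1 (mem_cylinder_self _ _) ε hε
  · simp only [glue, dif_neg hex]

variable {κ : Cardinal.{u}}

theorem exists_cylinder_subset_biInter (hκ : κ.IsRegular) (hγ : γ < κ.ord) (hα : α < κ.ord)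
    (hlen : ∀ δ < γ, (c δ).len < κ.ord) (hc : AntitoneOn (fun δ => (c δ).cyl) (Iio γ))
    (hx₀ : ∀ δ < γ, (c δ).cyl ⊆ cylinder x₀ α) :
    ∃ B < κ.ord, cylinder (glue γ x₀ c) B ⊆ cylinder x₀ α ∩ ⋂ δ < γ, (c δ).cyl := by
  set B := max α (⨆ δ : Iio γ, (c δ).len)
  have hsup : ⨆ δ : Iio γ, (c δ).len < κ.ord := by
    refine Ordinal.lift_iSup_lt_of_lt_cof ?_ fun δ => hlen δ δ.2
    rw [← Ordinal.lift_cof, hκ.cof_ord, mk_Iio_ordinal, lift_lift, lift_lt]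
    exact lt_ord.1 hγ
  have hle : ∀ δ < γ, (c δ).len ≤ B := fun δ hδ =>
    (Ordinal.le_iSup (fun δ : Iio γ => (c δ).len) ⟨δ, hδ⟩).trans (le_max_right _ _)
  refine ⟨B, max_lt hα hsup, subset_inter ?_ (subset_iInter₂ fun δ hδ => ?_)⟩
  · rw [← cylinder_eq_of_mem (glue_mem_cylinder hx₀)]
    exact cylinder_subset_cylinder (le_max_left _ _)
  · rw [Condition_s1.cyl, ← cylinder_eq_of_mem (glue_mem_cyl hc hδ)]
    exact cylinder_subset_cylinder (hle δ hδ)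

end Gluing

section Recursion

variable {X : Type v} (κ : Cardinal.{u}) (G : Ordinal.{u} → Set (Ordinal.{u} → X))
  (x₀ : Ordinal.{u} → X) (α : Ordinal.{u})

/-- `⟨x₀, α⟩` is a junk value: below `κ.ord` a condition as required exists (`baireSeq_spec`). -/
def baireSeq (γ : Ordinal.{u}) : Condition_s1 X :=
  if h : ∃ c : Condition_s1 X, c.len < κ.ord ∧ c.cyl ⊆ G γ ∩ cylinder x₀ α ∧
      ∀ δ < γ, c.cyl ⊆ (baireSeq δ).cyl then h.choose
  else ⟨x₀, α⟩
termination_by γ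

variable {κ G x₀ α}

theorem baireSeq_spec (hκ : κ.IsRegular)
    (hG : ∀ γ < κ.ord, IsOpen[gbTop κ X] (G γ) ∧ Dense[gbTop κ X] (G γ)) (hα : α < κ.ord)
    (γ : Ordinal.{u}) (hγ : γ < κ.ord) :
    (baireSeq κ G x₀ α γ).len < κ.ord ∧
      (baireSeq κ G x₀ α γ).cyl ⊆ G γ ∩ cylinder x₀ α ∧
      ∀ δ ≤ γ, (baireSeq κ G x₀ α γ).cyl ⊆ (baireSeq κ G x₀ α δ).cyl := by
  induction γ using WellFoundedLT.induction with
  | _ γ ih =>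
  set c := baireSeq κ G x₀ α
  have hc : AntitoneOn (fun δ => (c δ).cyl) (Iio γ) := fun δ _ δ' hδ' hle =>
    (ih δ' hδ' (hδ'.trans hγ)).2.2 δ hle
  obtain ⟨B, hB, hBsub⟩ := exists_cylinder_subset_biInter hκ hγ hα
    (fun δ hδ => (ih δ hδ (hδ.trans hγ)).1) hc
    (fun δ hδ => (ih δ hδ (hδ.trans hγ)).2.1.trans inter_subset_right)
  obtain ⟨y, δ, hδ, hy⟩ := exists_cylinder_subset_inter hκ.pos.ne' (hG γ hγ).1 (hG γ hγ).2
    (glue γ x₀ c) hB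
  have hex : ∃ d : Condition_s1 X, d.len < κ.ord ∧ d.cyl ⊆ G γ ∩ cylinder x₀ α ∧
      ∀ δ < γ, d.cyl ⊆ (c δ).cyl := by
    refine ⟨⟨y, δ⟩, hδ, fun z hz => ⟨(hy hz).1, (hBsub (hy hz).2).1⟩,
      fun δ' hδ' z hz => ?_⟩
    exact mem_iInter₂.1 (hBsub (hy hz).2).2 δ' hδ'
  have hcγ : c γ = hex.choose := by unfold c; rw [baireSeq, dif_pos hex]
  obtain ⟨hlen, hsub, hprev⟩ := hcγ ▸ hex.choose_spec
  exact ⟨hlen, hsub, fun δ hδ => hδ.eq_or_lt.elim (fun h => h ▸ subset_rfl) (hprev δ)⟩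

theorem exists_mem_cylinder_forall_mem_of_isRegular (hκ : κ.IsRegular)
    (hG : ∀ γ < κ.ord, IsOpen[gbTop κ X] (G γ) ∧ Dense[gbTop κ X] (G γ)) (hα : α < κ.ord) :
    ∃ y ∈ cylinder x₀ α, ∀ γ < κ.ord, y ∈ G γ := by
  have hc : AntitoneOn (fun δ => (baireSeq κ G x₀ α δ).cyl) (Iio κ.ord) :=
    fun δ _ δ' hδ' hle => (baireSeq_spec hκ hG hα δ' hδ').2.2 δ hle
  refine ⟨glue κ.ord x₀ (baireSeq κ G x₀ α), glue_mem_cylinder fun δ hδ =>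
    (baireSeq_spec hκ hG hα δ hδ).2.1.trans inter_subset_right, fun γ hγ => ?_⟩
  exact ((baireSeq_spec hκ hG hα γ hγ).2.1 (glue_mem_cyl hc hγ)).1

end Recursion

section Baire

variable {X : Type v} {κ : Cardinal.{u}}

theorem dense_iInter_of_isOpen_of_isRegular (hκ : κ.IsRegular) {ι : Type u} (hι : #ι ≤ κ)
    {F : ι → Set (Ordinal.{u} → X)} (ho : ∀ i, IsOpen[gbTop κ X] (F i))
    (hd : ∀ i, Dense[gbTop κ X] (F i)) : Dense[gbTop κ X] (⋂ i, F i) := by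
  obtain ⟨e⟩ : Nonempty (ι ↪ Iio κ.ord) := by
    rw [← lift_mk_le']
    simpa using hι
  let G : Ordinal.{u} → Set (Ordinal.{u} → X) := fun γ =>
    if h : ∃ i, (e i : Ordinal) = γ then F h.choose else univ
  have hG : ∀ γ < κ.ord, IsOpen[gbTop κ X] (G γ) ∧ Dense[gbTop κ X] (G γ) := by
    intro γ _
    by_cases h : ∃ i, (e i : Ordinal) = γ
    · simp only [G, dif_pos h]
      exact ⟨ho _, hd _⟩
    · simp only [G, dif_neg h]
      exact ⟨@isOpen_univ _ (gbTop κ X), @dense_univ _ (gbTop κ X)⟩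
  rw [dense_iff_inter_cylinder_nonempty hκ.pos.ne']
  intro x α hα
  obtain ⟨y, hyx, hyG⟩ := exists_mem_cylinder_forall_mem_of_isRegular (x₀ := x) hκ hG hα
  refine ⟨y, mem_iInter.2 fun i => ?_, hyx⟩
  have h : ∃ j, (e j : Ordinal) = e i := ⟨i, rfl⟩
  have hyi := hyG (e i) (e i).2
  simp only [G, dif_pos h] at hyi
  rwa [e.injective (Subtype.ext h.choose_spec)] at hyi

end Baire

section Flip

/-- `q⌢(1 - x)` in the paper's notation. -/
def flipTail (q : Ordinal.{u} → Bool) (α : Ordinal.{u}) (x : Ordinal.{u} → Bool) :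
    Ordinal.{u} → Bool :=
  fun β => if β < α then q β else !x β

variable {κ : Cardinal.{u}} {q x : Ordinal.{u} → Bool} {α γ : Ordinal.{u}}

theorem flipTail_mem_cylinder {y : Ordinal.{u} → Bool} (hy : y ∈ cylinder x γ) :
    flipTail q α y ∈ cylinder (flipTail q α x) γ := by
  intro β hβ
  simp only [flipTail, hy β hβ]

theorem surjOn_flipTail (h : α ≤ γ) :
    SurjOn (flipTail q α) (cylinder x γ) (cylinder (flipTail q α x) γ) := by
  intro z hz
  refine ⟨flipTail x α z, fun β hβ => ?_, funext fun β => ?_⟩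
  · by_cases hβα : β < α
    · simp [flipTail, hβα]
    · simp [flipTail, hβα, hz β hβ]
  · by_cases hβα : β < α
    · simp [flipTail, hβα, hz β (hβα.trans_le h)]
    · simp [flipTail, hβα]

theorem continuous_flipTail : Continuous[gbTop κ Bool, gbTop κ Bool] (flipTail q α) := by
  refine continuous_generateFrom_iff.2 ?_
  rintro _ ⟨γ, hγ, r, rfl⟩
  refine isOpen_of_forall_cylinder_subset fun x hx => ⟨γ, hγ, fun y hy => ?_⟩
  exact (cylinder_eq_of_mem hx).subset (flipTail_mem_cylinder hy)

theorem isOpenMap_flipTail (hα : α < κ.ord) :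
    @IsOpenMap _ _ (gbTop κ Bool) (gbTop κ Bool) (flipTail q α) := by
  have hκ : κ ≠ 0 := by
    rintro rfl
    simp at hα
  intro U hU
  refine isOpen_of_forall_cylinder_subset ?_
  rintro _ ⟨x, hx, rfl⟩
  obtain ⟨γ, hγ, hxU⟩ := exists_cylinder_subset_of_isOpen hκ hU x hx
  refine ⟨max γ α, max_lt hγ hα, (surjOn_flipTail (le_max_right _ _)).mono ?_ subset_rfl⟩
  exact (cylinder_subset_cylinder (le_max_left _ _)).trans hxU

end Flip

theorem comeager_flipped_tail_general (κ : Cardinal) (hreg : κ.IsRegular)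
    (D : Set (Ordinal → Bool)) (hD : Comeager κ D)
    (α : Ordinal) (hα : α < κ.ord) (p q : Ordinal → Bool) :
    ∃ η : Ordinal → Bool,
      (fun β => if β < α then p β else η β) ∈ D ∧
      (fun β => if β < α then q β else !(η β)) ∈ D := by
  obtain ⟨ι, F, hι, hF, hFD⟩ := hD
  let _ : TopologicalSpace (Ordinal → Bool) := gbTop κ Bool
  have hdense : Dense[gbTop κ Bool] (⋂ i, F i ∩ flipTail q α ⁻¹' F i) :=
    dense_iInter_of_isOpen_of_isRegular hreg hι
      (fun i => (hF i).1.inter ((hF i).1.preimage continuous_flipTail))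
      (fun i => (hF i).2.inter_of_isOpen_left ((hF i).2.preimage (isOpenMap_flipTail hα))
        (hF i).1)
  obtain ⟨y, hy, hyp⟩ := (dense_iff_inter_cylinder_nonempty hreg.pos.ne').1 hdense p α hα
  have hpy : (fun β => if β < α then p β else y β) = y := by
    funext β
    split_ifs with h
    exacts [(hyp β h).symm, rfl]
  refine ⟨y, ?_, hFD (mem_iInter.2 fun i => (mem_iInter.1 hy i).2)⟩
  rw [hpy]
  exact hFD (mem_iInter.2 fun i => (mem_iInter.1 hy i).1)

/-- for a co-meager `D ⊆ 2^κ`, any `α < κ` and any `p, q : α → 2`, there is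
`η : [α, κ) → 2` with `p⌢η ∈ D` and `q⌢(1-η) ∈ D`. -/
theorem comeager_flipped_tail (κ : Cardinal) (hreg : κ.IsRegular) (hunc : ℵ₀ < κ)
    (hpow : κ ^< κ = κ) (D : Set (Ordinal → Bool)) (hD : Comeager κ D)
    (α : Ordinal) (hα : α < κ.ord) (p q : Ordinal → Bool) :
    ∃ η : Ordinal → Bool,
      (fun β => if β < α then p β else η β) ∈ D ∧
      (fun β => if β < α then q β else !(η β)) ∈ D :=
  comeager_flipped_tail_general κ hreg D hD α hα p q
end
end

section
/- Let κ be an uncountable regular cardinal with κ^{<κ} = κ. Then there is no Borel reduction from E_0 to the identity relation id on 2^κ; that is, there is no Borel function f : 2^κ → 2^κ such that for all η, ξ ∈ 2^κ, {α : η(α) ≠ ξ(α)} is bounded if and only if f(η) = f(ξ). -/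
open Cardinal Set
open scoped Classical

noncomputable section

/-- Borel sets of a topology `t`: the smallest collection containing the open sets and
closed under complements and unions and intersections of length `≤ κ`. -/
inductive GBorel {X : Type*} (t : TopologicalSpace X) (κ : Cardinal) : Set X → Prop
  | isOpen (s : Set X) : @IsOpen _ t s → GBorel t κ s
  | compl (s : Set X) : GBorel t κ s → GBorel t κ sᶜ
  | iUnion (ι : Type) (f : ι → Set X) (hι : Cardinal.mk ι ≤ κ)
      (h : ∀ i, GBorel t κ (f i)) : GBorel t κ (⋃ i, f i)
  | iInter (ι : Type) (f : ι → Set X) (hι : Cardinal.mk ι ≤ κ)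
      (h : ∀ i, GBorel t κ (f i)) : GBorel t κ (⋂ i, f i)

/-- `E_0`: equality modulo bounded sets (below `κ`). -/
def E0 (κ : Cardinal) (η ξ : Ordinal → Bool) : Prop :=
  ∃ α < κ.ord, ∀ β, α ≤ β → β < κ.ord → η β = ξ β

/-- `E_S^*`: for every `α ∈ S` the symmetric difference `η △ ξ` is eventually constant
below `α`. -/
def EStar (S : Set Ordinal) (η ξ : Ordinal → Bool) : Prop :=
  ∀ α ∈ S, ∃ β < α, ∃ b : Bool, ∀ γ, β < γ → γ < α → xor (η γ) (ξ γ) = b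

/-- A Borel function `2^κ → 2^κ`: preimages of open sets are Borel. -/
def GBorelFun (κ : Cardinal) (f : (Ordinal → Bool) → (Ordinal → Bool)) : Prop :=
  ∀ s, @IsOpen _ (gbTop κ Bool) s → GBorel (gbTop κ Bool) κ (f ⁻¹' s)

/-!
Call a set κ-meager if it is covered by κ many nowhere dense sets. Since κ is regular, a
sequence of fewer than κ extending basic open sets `N_p` has a common extension, so a
transfinite construction of length κ proves the Baire category theorem: nonempty open sets
are not κ-meager. As in the classical case, κ-Borel sets then have the Baire property.

An `E_0`-invariant set `A` with the Baire property is meager or comeager: if `A` is comeager in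
some `N_p` with `p` of length `α`, then flipping the first `α` coordinates carries `N_p` onto
every other basic open set of length `α`, and since `κ^{<κ} = κ` there are only κ of those.
So if `f` reduced `E_0` to the identity, each coordinate of `f`, and hence `f` itself, would be
constant on a comeager set. That set would then lie in a single `E_0`-class, but `E_0`-classes
are meager.
-/

namespace BoundedTopology

open Function Ordinal TopologicalSpace Topology
open scoped symmDiff

universe u v

variable {X : Type v}

def basicOpen (α : Ordinal.{u}) (p : Ordinal.{u} → X) : Set (Ordinal.{u} → X) :=
  {η | ∀ β < α, η β = p β}

theorem mem_basicOpen_self (α : Ordinal.{u}) (p : Ordinal.{u} → X) : p ∈ basicOpen α p :=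
  fun _ _ => rfl

theorem basicOpen_eq_of_mem {α : Ordinal.{u}} {p x : Ordinal.{u} → X}
    (hx : x ∈ basicOpen α p) : basicOpen α x = basicOpen α p := by
  ext y
  exact forall₂_congr fun β hβ => by rw [hx β hβ]

theorem basicOpen_anti {α α' : Ordinal.{u}} (h : α ≤ α') (p : Ordinal.{u} → X) :
    basicOpen α' p ⊆ basicOpen α p :=
  fun _ hy β hβ => hy β (hβ.trans_le h)

section Topology

variable {κ : Cardinal.{u}}

theorem isOpen_basicOpen {α : Ordinal.{u}} (hα : α < κ.ord) (p : Ordinal.{u} → X) :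
    IsOpen[gbTop κ X] (basicOpen α p) :=
  isOpen_generateFrom_of_mem ⟨α, hα, p, rfl⟩

theorem isTopologicalBasis_basicOpen (hκ : κ ≠ 0) :
    @IsTopologicalBasis _ (gbTop κ X) {s | ∃ α < κ.ord, ∃ p, s = basicOpen α p} := by
  let := gbTop κ X
  refine ⟨?_, ?_, rfl⟩
  · rintro _ ⟨α, hα, p, rfl⟩ _ ⟨β, hβ, q, rfl⟩ x ⟨hxp, hxq⟩
    refine ⟨basicOpen (max α β) x, ⟨_, max_lt hα hβ, x, rfl⟩, mem_basicOpen_self _ _, ?_⟩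
    rw [← basicOpen_eq_of_mem hxp, ← basicOpen_eq_of_mem hxq]
    exact subset_inter (basicOpen_anti (le_max_left _ _) x)
      (basicOpen_anti (le_max_right _ _) x)
  · exact sUnion_eq_univ_iff.2 fun x =>
      ⟨_, ⟨0, Cardinal.ord_pos.2 (pos_iff_ne_zero.2 hκ), x, rfl⟩, mem_basicOpen_self _ _⟩

theorem isOpen_iff_forall_basicOpen_subset (hκ : κ ≠ 0) {s : Set (Ordinal.{u} → X)} :
    IsOpen[gbTop κ X] s ↔ ∀ x ∈ s, ∃ α < κ.ord, basicOpen α x ⊆ s := by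
  let := gbTop κ X
  rw [(isTopologicalBasis_basicOpen hκ).isOpen_iff]
  refine forall₂_congr fun x _ => ⟨?_, ?_⟩
  · rintro ⟨_, ⟨α, hα, p, rfl⟩, hx, hsub⟩
    exact ⟨α, hα, basicOpen_eq_of_mem hx ▸ hsub⟩
  · rintro ⟨α, hα, hsub⟩
    exact ⟨_, ⟨α, hα, x, rfl⟩, mem_basicOpen_self _ _, hsub⟩

theorem isOpen_setOf_apply_eq (hκ : ℵ₀ ≤ κ) {β : Ordinal.{u}} (hβ : β < κ.ord) (b : X) :
    IsOpen[gbTop κ X] {x | x β = b} :=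
  (isOpen_iff_forall_basicOpen_subset (aleph0_pos.trans_le hκ).ne').2 fun _ hx =>
    ⟨Order.succ β, (Cardinal.isSuccLimit_ord hκ).succ_lt hβ,
      fun _ hy => (hy β (Order.lt_succ β)).trans hx⟩

end Topology

/-- A condition `c` stands for the basic open set `basicOpen c.len c.pat`; `c ≤ d` means that
`d` extends `c`. -/
structure Condition (X : Type v) where
  len : Ordinal.{u}
  pat : Ordinal.{u} → X

instance : Preorder (Condition.{u} X) where
  le c d := c.len ≤ d.len ∧ d.pat ∈ basicOpen c.len c.pat
  le_refl c := ⟨le_rfl, mem_basicOpen_self _ _⟩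
  le_trans _ _ _ hcd hde :=
    ⟨hcd.1.trans hde.1, fun β hβ => (hde.2 β (hβ.trans_le hcd.1)).trans (hcd.2 β hβ)⟩

section Meager

variable {κ : Cardinal.{u}}

def NowhereDense (κ : Cardinal.{u}) (s : Set (Ordinal.{u} → X)) : Prop :=
  ∀ c : Condition X, c.len < κ.ord →
    ∃ d, c ≤ d ∧ d.len < κ.ord ∧ Disjoint (basicOpen d.len d.pat) s

def Meager (κ : Cardinal.{u}) (s : Set (Ordinal.{u} → X)) : Prop :=
  ∃ (ι : Type u) (F : ι → Set (Ordinal.{u} → X)),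
    #ι ≤ κ ∧ (∀ i, NowhereDense κ (F i)) ∧ s ⊆ ⋃ i, F i

theorem nowhereDense_biUnion_of_subsingleton {ι : Type*} {S : Set ι} (hS : S.Subsingleton)
    {F : ι → Set (Ordinal.{u} → X)} (hF : ∀ i, NowhereDense κ (F i)) :
    NowhereDense κ (⋃ i ∈ S, F i) := by
  rcases hS.eq_empty_or_singleton with rfl | ⟨i, rfl⟩
  · rw [biUnion_empty]
    exact fun c hc => ⟨c, le_rfl, hc, disjoint_empty _⟩
  · simpa using hF i

theorem Meager.mono {s t : Set (Ordinal.{u} → X)} (hst : s ⊆ t) (ht : Meager κ t) :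
    Meager κ s :=
  let ⟨ι, F, hι, hF, htF⟩ := ht
  ⟨ι, F, hι, hF, hst.trans htF⟩

theorem meager_empty : Meager κ (∅ : Set (Ordinal.{u} → X)) :=
  ⟨PEmpty, fun _ => ∅, by simp, fun i => i.elim, empty_subset _⟩

theorem NowhereDense.meager (hκ : κ ≠ 0) {s : Set (Ordinal.{u} → X)}
    (hs : NowhereDense κ s) : Meager κ s :=
  ⟨PUnit, fun _ => s, by simpa [Cardinal.one_le_iff_ne_zero], fun _ => hs,
    subset_iUnion (fun _ => s) PUnit.unit⟩

theorem meager_iUnion (hκ : ℵ₀ ≤ κ) {ι : Type u} (hι : #ι ≤ κ)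
    {s : ι → Set (Ordinal.{u} → X)} (hs : ∀ i, Meager κ (s i)) : Meager κ (⋃ i, s i) := by
  choose ι' F hι' hF hsF using hs
  refine ⟨Σ i, ι' i, fun j => F j.1 j.2, ?_, fun j => hF j.1 j.2, ?_⟩
  · calc #(Σ i, ι' i) = Cardinal.sum fun i => #(ι' i) := Cardinal.mk_sigma _
      _ ≤ Cardinal.sum fun _ : ι => κ := Cardinal.sum_le_sum _ _ hι'
      _ = #ι * κ := by simp
      _ ≤ κ * κ := mul_le_mul_left hι κ
      _ = κ := Cardinal.mul_eq_self hκ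
  · refine iUnion_subset fun i x hx => ?_
    obtain ⟨j, hj⟩ := mem_iUnion.1 (hsF i hx)
    exact mem_iUnion.2 ⟨⟨i, j⟩, hj⟩

theorem Meager.union (hκ : ℵ₀ ≤ κ) {s t : Set (Ordinal.{u} → X)} (hs : Meager κ s)
    (ht : Meager κ t) : Meager κ (s ∪ t) := by
  refine (meager_iUnion (s := fun b : ULift.{u} Bool => bif b.down then s else t) hκ
    (Cardinal.mk_le_aleph0.trans hκ) fun b => ?_).mono ?_
  · cases b with | up b => cases b <;> assumption
  · rintro x (hx | hx)
    exacts [mem_iUnion.2 ⟨⟨true⟩, hx⟩, mem_iUnion.2 ⟨⟨false⟩, hx⟩]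

theorem meager_biUnion_lt_ord (hκ : ℵ₀ ≤ κ) {s : Ordinal.{u} → Set (Ordinal.{u} → X)}
    (hs : ∀ i < κ.ord, Meager κ (s i)) : Meager κ (⋃ i < κ.ord, s i) := by
  refine (meager_iUnion (s := fun t : κ.ord.ToType => s (ToType.mk.symm t)) hκ
    (by rw [mk_toType, Cardinal.card_ord]) fun t => hs _ (ToType.mk.symm t).2).mono ?_
  simp only [iUnion_subset_iff]
  intro i hi x hx
  exact mem_iUnion.2 ⟨ToType.mk ⟨i, hi⟩, by simpa using hx⟩

theorem NowhereDense.preimage {φ : (Ordinal.{u} → X) → Ordinal.{u} → X}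
    (hφ : ∀ α p, φ ⁻¹' basicOpen α p = basicOpen α (φ p)) {s : Set (Ordinal.{u} → X)}
    (hs : NowhereDense κ s) : NowhereDense κ (φ ⁻¹' s) := by
  intro c hc
  obtain ⟨d, hcd, hd, hds⟩ := hs ⟨c.len, φ c.pat⟩ hc
  refine ⟨⟨d.len, φ d.pat⟩, ⟨hcd.1, ?_⟩, hd, ?_⟩
  · show d.pat ∈ φ ⁻¹' basicOpen c.len c.pat
    rw [hφ]
    exact hcd.2
  · rw [← hφ]
    exact hds.preimage φ

theorem Meager.preimage {φ : (Ordinal.{u} → X) → Ordinal.{u} → X}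
    (hφ : ∀ α p, φ ⁻¹' basicOpen α p = basicOpen α (φ p)) {s : Set (Ordinal.{u} → X)}
    (hs : Meager κ s) : Meager κ (φ ⁻¹' s) :=
  let ⟨ι, F, hι, hF, hsF⟩ := hs
  ⟨ι, fun i => φ ⁻¹' F i, hι, fun i => (hF i).preimage hφ,
    by rw [← preimage_iUnion]; exact preimage_mono hsF⟩

end Meager

section Baire

variable {κ : Cardinal.{u}}

/-- A common extension of the well-ordered chain `c` of conditions lying above `c₀`. -/
def fuse {ι : Type*} [LinearOrder ι] [WellFoundedLT ι] (c₀ : Condition.{u} X)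
    (c : ι → Condition.{u} X) : Condition.{u} X where
  len := max c₀.len (⨆ j, (c j).len)
  pat β := if h : ∃ j, β < (c j).len then (c (wellFounded_lt.min _ h)).pat β else c₀.pat β

section Fuse

variable {ι : Type*} [LinearOrder ι] [WellFoundedLT ι] {c₀ : Condition.{u} X}
  {c : ι → Condition.{u} X}

theorem le_fuse_of_monotone [Small.{u} ι] (hc : Monotone c) (j : ι) : c j ≤ fuse c₀ c := by
  refine ⟨(Ordinal.le_iSup _ j).trans (le_max_right _ _), fun β hβ => ?_⟩
  have h : ∃ j, β < (c j).len := ⟨j, hβ⟩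
  have hmin : wellFounded_lt.min _ h ≤ j :=
    wellFounded_lt.min_le (s := {j | β < (c j).len}) hβ
  simp only [fuse, dif_pos h]
  exact ((hc hmin).2 β (wellFounded_lt.min_mem _ h)).symm

theorem le_fuse_self (hc : ∀ j, c₀ ≤ c j) : c₀ ≤ fuse c₀ c := by
  refine ⟨le_max_left _ _, fun β hβ => ?_⟩
  simp only [fuse]
  split_ifs
  · exact (hc _).2 β hβ
  · rfl

end Fuse

theorem fuse_len_lt (hreg : κ.IsRegular) {i : Ordinal.{u}} (hi : i < κ.ord)
    {c₀ : Condition.{u} X} (h₀ : c₀.len < κ.ord) {c : Iio i → Condition.{u} X}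
    (hc : ∀ j, (c j).len < κ.ord) : (fuse c₀ c).len < κ.ord := by
  refine max_lt h₀ (Ordinal.lift_iSup_lt_of_lt_cof ?_ hc)
  rw [Cardinal.mk_Iio_ordinal, ← Ordinal.lift_cof, hreg.cof_ord, Cardinal.lift_lift,
    Cardinal.lift_lt]
  exact lt_ord.1 hi

theorem monotone_restrict_Iio {f : Ordinal.{u} → Condition.{u} X} {i : Ordinal.{u}}
    (hf : ∀ k < i, ∀ j < k, f j ≤ f k) : Monotone fun j : Iio i => f j := by
  intro j k hjk
  rcases hjk.lt_or_eq with hlt | rfl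
  · exact hf k k.2 j hlt
  · exact le_rfl

def avoid (κ : Cardinal.{u}) (s : Set (Ordinal.{u} → X)) (c : Condition.{u} X) :
    Condition.{u} X :=
  if h : ∃ d, c ≤ d ∧ d.len < κ.ord ∧ Disjoint (basicOpen d.len d.pat) s then h.choose else c

theorem avoid_spec {s : Set (Ordinal.{u} → X)} (hs : NowhereDense κ s) {c : Condition.{u} X}
    (hc : c.len < κ.ord) : c ≤ avoid κ s c ∧ (avoid κ s c).len < κ.ord ∧
      Disjoint (basicOpen (avoid κ s c).len (avoid κ s c).pat) s := by
  rw [avoid, dif_pos (hs c hc)]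
  exact (hs c hc).choose_spec

def fusionSeq (κ : Cardinal.{u}) (D : Ordinal.{u} → Set (Ordinal.{u} → X))
    (c₀ : Condition.{u} X) : Ordinal.{u} → Condition.{u} X :=
  Ordinal.lt_wf.fix fun i prev => avoid κ (D i) (fuse c₀ fun j : Iio i => prev j j.2)

variable {D : Ordinal.{u} → Set (Ordinal.{u} → X)} {c₀ : Condition.{u} X}

theorem fusionSeq_eq (i : Ordinal.{u}) :
    fusionSeq κ D c₀ i = avoid κ (D i) (fuse c₀ fun j : Iio i => fusionSeq κ D c₀ j) :=
  Ordinal.lt_wf.fix_eq _ i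

theorem fusionSeq_spec (hreg : κ.IsRegular) (hD : ∀ i < κ.ord, NowhereDense κ (D i))
    (h₀ : c₀.len < κ.ord) (i : Ordinal.{u}) (hi : i < κ.ord) :
    (fusionSeq κ D c₀ i).len < κ.ord ∧ c₀ ≤ fusionSeq κ D c₀ i ∧
      (∀ j < i, fusionSeq κ D c₀ j ≤ fusionSeq κ D c₀ i) ∧
      Disjoint (basicOpen (fusionSeq κ D c₀ i).len (fusionSeq κ D c₀ i).pat) (D i) := by
  induction i using WellFoundedLT.induction with
  | _ i ih =>
  have ih' : ∀ j : Iio i, _ := fun j => ih j j.2 (j.2.trans hi)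
  have hc := monotone_restrict_Iio fun k hk => (ih k hk (hk.trans hi)).2.2.1
  obtain ⟨hle, hlt, hdisj⟩ := avoid_spec (hD i hi) (fuse_len_lt hreg hi h₀ fun j => (ih' j).1)
  rw [← fusionSeq_eq] at hle hlt hdisj
  exact ⟨hlt, (le_fuse_self fun j => (ih' j).2.1).trans hle,
    fun j hj => (le_fuse_of_monotone hc ⟨j, hj⟩).trans hle, hdisj⟩

theorem exists_mem_basicOpen_forall_notMem (hreg : κ.IsRegular)
    (hD : ∀ i < κ.ord, NowhereDense κ (D i)) (h₀ : c₀.len < κ.ord) :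
    ∃ x ∈ basicOpen c₀.len c₀.pat, ∀ i < κ.ord, x ∉ D i := by
  have hspec := fusionSeq_spec hreg hD h₀
  have hc := monotone_restrict_Iio fun k hk => (hspec k hk).2.2.1
  refine ⟨_, (le_fuse_self (c := fun j : Iio κ.ord => fusionSeq κ D c₀ j)
    fun j => (hspec j j.2).2.1).2, fun i hi => ?_⟩
  exact (hspec i hi).2.2.2.notMem_of_mem_left (le_fuse_of_monotone hc ⟨i, hi⟩).2

theorem Meager.exists_mem_basicOpen_notMem (hreg : κ.IsRegular) {s : Set (Ordinal.{u} → X)}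
    (hs : Meager κ s) (h₀ : c₀.len < κ.ord) : ∃ x ∈ basicOpen c₀.len c₀.pat, x ∉ s := by
  obtain ⟨ι, F, hι, hF, hsF⟩ := hs
  obtain ⟨e⟩ := (Cardinal.le_def ι κ.ord.ToType).1 (by rwa [mk_toType, Cardinal.card_ord])
  set g : ι → Ordinal.{u} := fun t => ToType.mk.symm (e t)
  have hg : Injective g := Subtype.val_injective.comp (ToType.mk.symm.injective.comp e.injective)
  obtain ⟨x, hx, hxD⟩ := exists_mem_basicOpen_forall_notMem (D := fun i => ⋃ t ∈ g ⁻¹' {i}, F t)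
    hreg (fun _ _ => nowhereDense_biUnion_of_subsingleton
      (subsingleton_singleton.preimage hg) hF) h₀
  refine ⟨x, hx, fun hxs => ?_⟩
  obtain ⟨t, ht⟩ := mem_iUnion.1 (hsF hxs)
  exact hxD (g t) (ToType.mk.symm (e t)).2 (mem_biUnion rfl ht)

theorem Meager.compl_nonempty [Nonempty X] (hreg : κ.IsRegular) {s : Set (Ordinal.{u} → X)}
    (hs : Meager κ s) : sᶜ.Nonempty :=
  let ⟨x, _, hx⟩ := hs.exists_mem_basicOpen_notMem hreg
    (c₀ := ⟨0, fun _ => Classical.arbitrary X⟩) (Cardinal.ord_pos.2 hreg.pos)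
  ⟨x, hx⟩

end Baire

section BaireProperty

variable {κ : Cardinal.{u}}

def HasBaireProperty (κ : Cardinal.{u}) (s : Set (Ordinal.{u} → X)) : Prop :=
  ∃ v, IsOpen[gbTop κ X] v ∧ Meager κ (s ∆ v)

theorem hasBaireProperty_of_isOpen {v : Set (Ordinal.{u} → X)} (hv : IsOpen[gbTop κ X] v) :
    HasBaireProperty κ v :=
  ⟨v, hv, by simpa using meager_empty⟩

theorem nowhereDense_frontier (hκ : κ ≠ 0) {v : Set (Ordinal.{u} → X)}
    (hv : IsOpen[gbTop κ X] v) : NowhereDense κ (@frontier _ (gbTop κ X) v) := by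
  let := gbTop κ X
  intro c hc
  by_cases hcv : Disjoint (basicOpen c.len c.pat) v
  · exact ⟨c, le_rfl, hc, (hcv.closure_right (isOpen_basicOpen hc _)).mono_right
      frontier_subset_closure⟩
  · obtain ⟨x, hxc, hxv⟩ := not_disjoint_iff.1 hcv
    obtain ⟨α, hα, hxα⟩ := (isOpen_iff_forall_basicOpen_subset hκ).1 hv x hxv
    refine ⟨⟨max c.len α, x⟩, ⟨le_max_left _ _, hxc⟩, max_lt hc hα, ?_⟩
    rw [hv.frontier_eq]
    exact disjoint_sdiff_right.mono_left ((basicOpen_anti (le_max_right _ _) x).trans hxα)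

theorem HasBaireProperty.compl (hκ : ℵ₀ ≤ κ) {s : Set (Ordinal.{u} → X)}
    (hs : HasBaireProperty κ s) : HasBaireProperty κ sᶜ := by
  let := gbTop κ X
  obtain ⟨v, hv, hsv⟩ := hs
  have hκ₀ : κ ≠ 0 := (aleph0_pos.trans_le hκ).ne'
  refine ⟨(closure v)ᶜ, isClosed_closure.isOpen_compl,
    (hsv.union hκ ((nowhereDense_frontier hκ₀ hv).meager hκ₀)).mono ?_⟩
  calc sᶜ ∆ (closure v)ᶜ ≤ sᶜ ∆ vᶜ ⊔ vᶜ ∆ (closure v)ᶜ := symmDiff_triangle _ _ _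
    _ = s ∆ v ∪ frontier v := by
      rw [compl_symmDiff_compl, compl_symmDiff_compl, symmDiff_of_le subset_closure,
        hv.frontier_eq]
      rfl

theorem hasBaireProperty_iUnion (hκ : ℵ₀ ≤ κ) {ι : Type u} (hι : #ι ≤ κ)
    {s : ι → Set (Ordinal.{u} → X)} (hs : ∀ i, HasBaireProperty κ (s i)) :
    HasBaireProperty κ (⋃ i, s i) := by
  choose v hv hsv using hs
  exact ⟨⋃ i, v i, @isOpen_iUnion _ _ (gbTop κ X) _ hv,
    (meager_iUnion hκ hι hsv).mono iUnion_symmDiff_iUnion_subset⟩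

theorem _root_.GBorel.hasBaireProperty {κ : Cardinal.{0}} (hκ : ℵ₀ ≤ κ)
    {s : Set (Ordinal.{0} → X)} (hs : GBorel (gbTop κ X) κ s) : HasBaireProperty κ s := by
  induction hs with
  | isOpen s hs => exact hasBaireProperty_of_isOpen hs
  | compl s _ ih => exact ih.compl hκ
  | iUnion ι s hι _ ih => exact hasBaireProperty_iUnion hκ hι ih
  | iInter ι s hι _ ih =>
    simpa only [compl_iUnion, compl_compl] using
      (hasBaireProperty_iUnion hκ hι fun i => (ih i).compl hκ).compl hκ

theorem HasBaireProperty.exists_basicOpen_diff_meager (hκ : κ ≠ 0)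
    {s : Set (Ordinal.{u} → X)} (hs : HasBaireProperty κ s) (hns : ¬ Meager κ s) :
    ∃ α < κ.ord, ∃ p, Meager κ (basicOpen α p \ s) := by
  obtain ⟨v, hv, hsv⟩ := hs
  rcases v.eq_empty_or_nonempty with rfl | ⟨x, hxv⟩
  · rw [← bot_eq_empty, symmDiff_bot] at hsv
    exact absurd hsv hns
  obtain ⟨α, hα, hxα⟩ := (isOpen_iff_forall_basicOpen_subset hκ).1 hv x hxv
  exact ⟨α, hα, x, hsv.mono fun y hy => mem_symmDiff.2 (Or.inr ⟨hxα hy.1, hy.2⟩)⟩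

end BaireProperty

section ZeroOne

variable {κ : Cardinal.{u}}

def xorBelow (α : Ordinal.{u}) (d x : Ordinal.{u} → Bool) : Ordinal.{u} → Bool :=
  fun β => if β < α then xor (x β) (d β) else x β

theorem preimage_xorBelow_basicOpen (α : Ordinal.{u}) (d : Ordinal.{u} → Bool)
    (β : Ordinal.{u}) (p : Ordinal.{u} → Bool) :
    xorBelow α d ⁻¹' basicOpen β p = basicOpen β (xorBelow α d p) := by
  ext x
  refine forall₂_congr fun γ _ => ?_
  simp only [xorBelow]
  split_ifs
  · cases x γ <;> cases p γ <;> cases d γ <;> decide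
  · rfl

theorem E0_xorBelow {α : Ordinal.{u}} (hα : α < κ.ord) (d x : Ordinal.{u} → Bool) :
    E0 κ (xorBelow α d x) x :=
  ⟨α, hα, fun _ hβ _ => if_neg hβ.not_gt⟩

theorem meager_or_meager_compl (hκ : ℵ₀ ≤ κ) (hpow : κ ^< κ = κ)
    {A : Set (Ordinal.{u} → Bool)} (hA : HasBaireProperty κ A)
    (hinv : ∀ η ξ, E0 κ η ξ → η ∈ A → ξ ∈ A) : Meager κ A ∨ Meager κ Aᶜ := by
  refine or_iff_not_imp_left.2 fun hA' => ?_
  obtain ⟨α, hα, p, hp⟩ := hA.exists_basicOpen_diff_meager (aleph0_pos.trans_le hκ).ne' hA'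
  set extend : (α.ToType → Bool) → Ordinal.{u} → Bool :=
    fun c γ => if h : γ < α then c (ToType.mk ⟨γ, h⟩) else false
  have hcard : #(α.ToType → Bool) ≤ κ := calc
    #(α.ToType → Bool) = 2 ^ α.card := by simp [mk_toType]
    _ ≤ κ ^ α.card :=
      Cardinal.power_le_power_right ((Cardinal.natCast_lt_aleph0 (n := 2)).le.trans hκ)
    _ ≤ κ ^< κ := Cardinal.le_powerlt κ (lt_ord.1 hα)
    _ = κ := hpow
  refine (meager_iUnion hκ hcard fun c =>
    (hp.preimage (preimage_xorBelow_basicOpen α (extend c)))).mono fun x hx => ?_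
  -- flipping `x` by `x xor p` below `α` moves it into `basicOpen α p`, and keeps it outside `A`
  refine mem_iUnion.2 ⟨fun t => xor (x (ToType.mk.symm t)) (p (ToType.mk.symm t)), ?_, ?_⟩
  · intro γ hγ
    simp [xorBelow, extend, hγ]
  · exact fun h => hx (hinv _ _ (E0_xorBelow hα _ x) h)

end ZeroOne

theorem nowhereDense_setOf_eq_on_tail [Nontrivial X] {κ : Cardinal.{u}} (hκ : ℵ₀ ≤ κ)
    {α : Ordinal.{u}} (hα : α < κ.ord) (η : Ordinal.{u} → X) :
    NowhereDense κ {ξ | ∀ β, α ≤ β → β < κ.ord → ξ β = η β} := by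
  intro c hc
  set δ := max α c.len
  obtain ⟨b, hb⟩ := exists_ne (η δ)
  refine ⟨⟨Order.succ δ, update c.pat δ b⟩, ⟨(le_max_right _ _).trans (Order.le_succ δ),
    fun γ hγ => update_of_ne (hγ.trans_le (le_max_right _ _)).ne _ _⟩,
    (Cardinal.isSuccLimit_ord hκ).succ_lt (max_lt hα hc), ?_⟩
  refine disjoint_left.2 fun ξ hξ hξη => hb ?_
  rw [← hξη δ (le_max_left _ _) (max_lt hα hc), hξ δ (Order.lt_succ δ)]
  exact (update_self δ b c.pat).symm

theorem meager_setOf_E0 {κ : Cardinal.{u}} (hκ : ℵ₀ ≤ κ) (η : Ordinal.{u} → Bool) :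
    Meager κ {ξ | E0 κ ξ η} :=
  (meager_biUnion_lt_ord hκ fun _ hα =>
    (nowhereDense_setOf_eq_on_tail hκ hα η).meager (aleph0_pos.trans_le hκ).ne').mono
    fun _ ⟨_, hα, h⟩ => mem_biUnion hα h

section Reduction

variable {κ : Cardinal.{0}} {f : (Ordinal.{0} → Bool) → Ordinal.{0} → Bool}

theorem exists_meager_apply_ne (hreg : κ.IsRegular) (hpow : κ ^< κ = κ) (hf : GBorelFun κ f)
    (hinv : ∀ η ξ, E0 κ η ξ → ∀ β < κ.ord, f η β = f ξ β) {β : Ordinal.{0}} (hβ : β < κ.ord) :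
    ∃ b, Meager κ {x | f x β ≠ b} := by
  have hA :=
    (hf _ (isOpen_setOf_apply_eq hreg.aleph0_le hβ true)).hasBaireProperty hreg.aleph0_le
  rcases meager_or_meager_compl hreg.aleph0_le hpow hA fun η ξ h hη =>
    (hinv η ξ h β hβ ▸ hη : f ξ β = true) with h | h
  · exact ⟨false, by simpa using h⟩
  · exact ⟨true, by simpa [compl_ofPred] using h⟩

theorem exists_meager_ne_on_lt_ord (hreg : κ.IsRegular) (hpow : κ ^< κ = κ)
    (hf : GBorelFun κ f) (hinv : ∀ η ξ, E0 κ η ξ → ∀ β < κ.ord, f η β = f ξ β) :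
    ∃ y : Ordinal.{0} → Bool, Meager κ {x | ∃ β < κ.ord, f x β ≠ y β} := by
  have : ∀ β, ∃ b, β < κ.ord → Meager κ {x | f x β ≠ b} := fun β => by
    by_cases hβ : β < κ.ord
    · obtain ⟨b, hb⟩ := exists_meager_apply_ne hreg hpow hf hinv hβ
      exact ⟨b, fun _ => hb⟩
    · exact ⟨false, fun h => absurd h hβ⟩
  choose y hy using this
  exact ⟨y, (meager_biUnion_lt_ord hreg.aleph0_le fun β hβ => hy β hβ).mono
    fun x ⟨β, hβ, hx⟩ => mem_biUnion hβ hx⟩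

end Reduction

end BoundedTopology

theorem E0_not_reducible_to_id_general (κ : Cardinal) (hreg : κ.IsRegular)
    (hpow : κ ^< κ = κ) :
    ¬ ∃ f : (Ordinal → Bool) → (Ordinal → Bool), GBorelFun κ f ∧
      ∀ η ξ, E0 κ η ξ ↔ (∀ β < κ.ord, f η β = f ξ β) := by
  rintro ⟨f, hf, hred⟩
  obtain ⟨y, hy⟩ :=
    BoundedTopology.exists_meager_ne_on_lt_ord hreg hpow hf fun η ξ h => (hred η ξ).1 h
  have hagree : ∀ x ∈ {x | ∃ β < κ.ord, f x β ≠ y β}ᶜ, ∀ β < κ.ord, f x β = y β := by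
    simp
  obtain ⟨x₁, hx₁⟩ := hy.compl_nonempty hreg
  obtain ⟨x₂, hx₂⟩ := (hy.union hreg.aleph0_le
    (BoundedTopology.meager_setOf_E0 hreg.aleph0_le x₁)).compl_nonempty hreg
  rw [compl_union] at hx₂
  exact hx₂.2 ((hred x₂ x₁).2 fun β hβ =>
    (hagree x₂ hx₂.1 β hβ).trans (hagree x₁ hx₁ β hβ).symm)

/-- there is no Borel reduction of `E_0` to the identity relation on `2^κ`. -/
theorem E0_not_reducible_to_id (κ : Cardinal) (hreg : κ.IsRegular) (hunc : ℵ₀ < κ)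
    (hpow : κ ^< κ = κ) :
    ¬ ∃ f : (Ordinal → Bool) → (Ordinal → Bool), GBorelFun κ f ∧
      ∀ η ξ, E0 κ η ξ ↔ (∀ β < κ.ord, f η β = f ξ β) :=
  E0_not_reducible_to_id_general κ hreg hpow
end
end

section
/- Let κ be an uncountable regular cardinal with κ^{<κ} = κ and S ⊆ lim(κ). Then E_S^* is Borel reducible to the identity on κ^κ: there is a Borel (indeed continuous) function f : 2^κ → κ^κ such that η E_S^* ξ iff f(η) = f(ξ). Here η E_S^* ξ iff for all α ∈ S there is β < α such that (η△ξ) is constant on (β, α). -/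
open Cardinal Set
open scoped Classical

noncomputable section

/-! For `α ∈ S`, "`η △ ξ` is eventually constant below `α`" is an equivalence relation
that only looks at `η↾α`, so after choosing a representative of each class it becomes
equality below `α` of the representatives. A bijection `κ ≃ κ × κ` lets a single
`f η ∈ κ^κ` record, at the coordinate coding `(α, γ)`, bit `γ` of the representative of `η`
for `α`, for all `α ∈ S` at once. That coordinate only reads `η↾α` with `α < κ`; as `κ` is
regular, fewer than `κ` coordinates together still read only a bounded initial segment of
`η`, so `f` is continuous. -/

universe u

section TailEquiv

variable {ι : Type*} [LinearOrder ι]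

def TailEquiv (α : ι) (η ξ : ι → Bool) : Prop :=
  ∃ β < α, ∃ b : Bool, ∀ γ, β < γ → γ < α → xor (η γ) (ξ γ) = b

theorem TailEquiv.equivalence {α : ι} (hα : ¬IsMin α) : Equivalence (TailEquiv α) := by
  obtain ⟨β₀, hβ₀⟩ := not_isMin_iff.mp hα
  refine ⟨fun η => ⟨β₀, hβ₀, false, fun γ _ _ => Bool.xor_self _⟩, ?_, ?_⟩
  · rintro η ξ ⟨β, hβ, b, hb⟩
    exact ⟨β, hβ, b, fun γ h₁ h₂ => by rw [Bool.xor_comm]; exact hb γ h₁ h₂⟩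
  · rintro η ξ ζ ⟨β₁, hβ₁, b₁, hb₁⟩ ⟨β₂, hβ₂, b₂, hb₂⟩
    refine ⟨max β₁ β₂, max_lt hβ₁ hβ₂, xor b₁ b₂, fun γ hγ hγα => ?_⟩
    rw [← hb₁ γ ((le_max_left _ _).trans_lt hγ) hγα,
      ← hb₂ γ ((le_max_right _ _).trans_lt hγ) hγα]
    cases η γ <;> cases ξ γ <;> cases ζ γ <;> rfl

theorem tailEquiv_of_eqOn {α : ι} (hα : ¬IsMin α) {η ξ : ι → Bool}
    (h : ∀ γ < α, η γ = ξ γ) : TailEquiv α η ξ := by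
  obtain ⟨β₀, hβ₀⟩ := not_isMin_iff.mp hα
  exact ⟨β₀, hβ₀, false, fun γ _ hγ => by rw [h γ hγ, Bool.xor_self]⟩

def tailRep (α : ι) (η : ι → Bool) : ι → Bool :=
  Quot.out (Quot.mk (TailEquiv α) η)

theorem tailRep_eq_of_tailEquiv {α : ι} {η ξ : ι → Bool} (h : TailEquiv α η ξ) :
    tailRep α η = tailRep α ξ :=
  congrArg Quot.out (Quot.sound h)

theorem tailEquiv_tailRep {α : ι} (hα : ¬IsMin α) (η : ι → Bool) :
    TailEquiv α (tailRep α η) η :=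
  (TailEquiv.equivalence hα).eqvGen_iff.mp (Quot.eq.mp (Quot.out_eq _))

theorem tailEquiv_iff_tailRep_eqOn {α : ι} (hα : ¬IsMin α) {η ξ : ι → Bool} :
    TailEquiv α η ξ ↔ ∀ γ < α, tailRep α η γ = tailRep α ξ γ := by
  refine ⟨fun h γ _ => by rw [tailRep_eq_of_tailEquiv h], fun h => ?_⟩
  have E := TailEquiv.equivalence hα
  exact E.trans (E.symm (tailEquiv_tailRep hα η))
    (E.trans (tailEquiv_of_eqOn hα h) (tailEquiv_tailRep hα ξ))

end TailEquiv

theorem Cardinal.IsRegular.exists_lt_ord_bound {κ : Cardinal.{u}} (hreg : κ.IsRegular)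
    {d : Ordinal.{u} → Ordinal.{u}} (hd : ∀ β < κ.ord, d β < κ.ord)
    {a : Ordinal} (ha : a < κ.ord) :
    ∃ a' < κ.ord, ∀ β < a, d β < a' := by
  refine ⟨⨆ β : Iio a, d β + 1, Ordinal.lift_iSup_add_one_lt_of_lt_cof ?_ fun β => ?_,
    fun β hβ => Ordinal.lt_iSup_add_one (fun β : Iio a => d β) ⟨β, hβ⟩⟩
  · rw [mk_Iio_ordinal, Cardinal.lift_lift, ← Ordinal.lift_cof, hreg.cof_ord]
    exact Cardinal.lift_lt.mpr (Cardinal.lt_ord.mp ha)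
  · exact hd β (β.2.trans ha)

theorem continuous_gbTop_of_eqOn {κ : Cardinal.{u}} (hreg : κ.IsRegular) {X Y : Type*}
    {f : (Ordinal.{u} → X) → Ordinal.{u} → Y} (d : Ordinal.{u} → Ordinal.{u})
    (hd : ∀ β < κ.ord, d β < κ.ord)
    (hf : ∀ β η ξ, (∀ γ < d β, η γ = ξ γ) → f η β = f ξ β) :
    @Continuous _ _ (gbTop κ X) (gbTop κ Y) f := by
  let _ : TopologicalSpace (Ordinal.{u} → X) := gbTop κ X
  refine continuous_generateFrom_iff.mpr ?_
  rintro _ ⟨a, ha, p, rfl⟩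
  obtain ⟨a', ha', hda⟩ := hreg.exists_lt_ord_bound hd ha
  refine isOpen_iff_forall_mem_open.mpr fun η hη =>
    ⟨{ξ | ∀ γ < a', ξ γ = η γ}, fun ξ hξ β hβ => ?_, ?_, fun _ _ => rfl⟩
  · rw [← hη β hβ]
    exact hf β ξ η fun γ hγ => hξ γ (hγ.trans (hda β hβ))
  · exact TopologicalSpace.isOpen_generateFrom_of_mem ⟨a', ha', η, rfl⟩

theorem exists_decode_ord_prod {κ : Cardinal} (hκ : ℵ₀ ≤ κ) :
    ∃ P : Ordinal → Ordinal × Ordinal, (∀ β < κ.ord, (P β).1 < κ.ord) ∧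
      ∀ α < κ.ord, ∀ γ < κ.ord, ∃ β < κ.ord, P β = (α, γ) := by
  obtain ⟨e⟩ : Nonempty (Iio κ.ord ≃ Iio κ.ord × Iio κ.ord) := by
    refine Cardinal.eq.mp ?_
    rw [mk_prod, Cardinal.lift_id, mk_Iio_ordinal, card_ord, mul_eq_self (by simpa using hκ)]
  refine ⟨fun β => if h : β ∈ Iio κ.ord then Prod.map Subtype.val Subtype.val (e ⟨β, h⟩) else 0,
    fun β hβ => ?_, fun α hα γ hγ => ⟨e.symm (⟨α, hα⟩, ⟨γ, hγ⟩), (e.symm _).2, ?_⟩⟩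
  · dsimp only
    rw [dif_pos (mem_Iio.mpr hβ)]
    exact (e ⟨β, hβ⟩).1.2
  · dsimp only
    rw [dif_pos (e.symm _).2]
    simp

section Reduction

variable {ι J : Type*} [LinearOrder ι]

def tailReduction (S : Set ι) (P : J → ι × ι) (η : ι → Bool) (β : J) : Ordinal :=
  if (P β).1 ∈ S ∧ tailRep (P β).1 η (P β).2 = true then 1 else 0

theorem tailReduction_eq_of_eqOn {S : Set ι} (hS : ∀ α ∈ S, ¬IsMin α) (P : J → ι × ι)
    {β : J} {η ξ : ι → Bool} (h : ∀ γ < (P β).1, η γ = ξ γ) :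
    tailReduction S P η β = tailReduction S P ξ β := by
  by_cases hα : (P β).1 ∈ S
  · rw [tailReduction, tailReduction,
      tailRep_eq_of_tailEquiv (tailEquiv_of_eqOn (hS _ hα) h)]
  · simp [tailReduction, hα]

theorem forall_tailEquiv_iff_tailReduction_eq {S : Set ι} (hS : ∀ α ∈ S, ¬IsMin α)
    {P : J → ι × ι} {T : Set J} (hP : ∀ α ∈ S, ∀ γ < α, ∃ β ∈ T, P β = (α, γ))
    {η ξ : ι → Bool} :
    (∀ α ∈ S, TailEquiv α η ξ) ↔
      ∀ β ∈ T, tailReduction S P η β = tailReduction S P ξ β := by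
  refine ⟨fun h β _ => ?_, fun h α hα => ?_⟩
  · by_cases hα : (P β).1 ∈ S
    · rw [tailReduction, tailReduction, tailRep_eq_of_tailEquiv (h _ hα)]
    · simp [tailReduction, hα]
  · refine (tailEquiv_iff_tailRep_eqOn (hS α hα)).mpr fun γ hγ => ?_
    obtain ⟨β, hβ, hPβ⟩ := hP α hα γ hγ
    have := h β hβ
    rw [tailReduction, tailReduction, hPβ] at this
    revert this
    cases tailRep α η γ <;> cases tailRep α ξ γ <;> simp [hα]

end Reduction

theorem EStar_reducible_to_id_general (κ : Cardinal) (hreg : κ.IsRegular) (S : Set Ordinal)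
    (hS : S ⊆ {α | α < κ.ord ∧ Order.IsSuccLimit α}) :
    ∃ f : (Ordinal → Bool) → (Ordinal → Ordinal),
      @Continuous _ _ (gbTop κ Bool) (gbTop κ Ordinal) f ∧
      ∀ η ξ, EStar S η ξ ↔ (∀ β < κ.ord, f η β = f ξ β) := by
  obtain ⟨P, hP_lt, hP_surj⟩ := exists_decode_ord_prod hreg.aleph0_le
  have hS_min : ∀ α ∈ S, ¬IsMin α := fun α hα => (hS hα).2.not_isMin
  refine ⟨tailReduction S P,
    continuous_gbTop_of_eqOn hreg (fun β => (P β).1) hP_lt fun β η ξ =>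
      tailReduction_eq_of_eqOn hS_min P,
    fun η ξ => forall_tailEquiv_iff_tailReduction_eq hS_min ?_⟩
  intro α hα γ hγ
  exact hP_surj α (hS hα).1 γ (hγ.trans (hS hα).1)

/-- `E_S^*` is reducible to the identity on `κ^κ` via a continuous
(hence Borel) function. -/
theorem EStar_reducible_to_id (κ : Cardinal) (hreg : κ.IsRegular) (hunc : ℵ₀ < κ)
    (hpow : κ ^< κ = κ) (S : Set Ordinal)
    (hS : S ⊆ {α | α < κ.ord ∧ Order.IsSuccLimit α}) :
    ∃ f : (Ordinal → Bool) → (Ordinal → Ordinal),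
      @Continuous _ _ (gbTop κ Bool) (gbTop κ Ordinal) f ∧
      ∀ η ξ, EStar S η ξ ↔ (∀ β < κ.ord, f η β = f ξ β) :=
  EStar_reducible_to_id_general κ hreg S hS
end
end

section
/- Let κ be regular uncountable and λ < κ regular, and assume ◊_κ(S^κ_λ) holds, witnessed by a sequence ⟨D_α : α ∈ S^κ_λ⟩ such that {α ∈ S^κ_λ : A ∩ α = D_α} is stationary for every A ⊆ κ. For A ⊆ κ define H(A) = {α ∈ S^κ_λ : D_α ⊆_* A ∩ α}, where for X, Y ⊆ α, X ⊆_* Y means there is β < α with X \ β ⊆ Y \ β. Then for all A, B ⊆ κ: A \ B is bounded in κ if and only if H(A) \ H(B) is not λ-stationary (i.e., H(A) \ H(B) misses some λ-club set). Hence H embeds ⟨P(κ), ⊆_*⟩ into ⟨P(κ), ⊆_{NS(λ)}⟩. -/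
/-!
If `A \ B ⊆ β`, then `H(A) \ H(B)` misses the `λ`-club `{0} ∪ (β, κ)`: above `β`, almost
inclusion of `D_α` in `A` gives almost inclusion in `B`. If `A \ B` is unbounded and `C` is a
`λ`-club, the common limit points of `C` and `A \ B` form a club (as `cf κ > ω`), so `◊` yields
such an `α` of cofinality `λ` with `D_α = (A \ B) ∩ α`. Then `α ∈ C` by `λ`-closure, `D_α ⊆ A`
gives `α ∈ H(A)`, and `D_α` is cofinal in `α` and disjoint from `B`, so `α ∉ H(B)`.
-/

open Cardinal Set
open scoped Classical

noncomputable section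

/-- `C` is a club subset of the ordinal `δ`: a subset of `δ`, unbounded in `δ`, and
containing all of its (nonzero) limit points below `δ`. -/
def IsClubIn (C : Set Ordinal) (δ : Ordinal) : Prop :=
  C ⊆ Set.Iio δ ∧ (∀ β < δ, ∃ γ ∈ C, β < γ) ∧
    ∀ β < δ, β ≠ 0 → (∀ γ < β, ∃ ε ∈ C, γ < ε ∧ ε < β) → β ∈ C

/-- `S` is stationary in `δ`: it meets every club subset of `δ`. -/
def StatIn (S : Set Ordinal) (δ : Ordinal) : Prop :=
  ∀ C, IsClubIn C δ → (S ∩ C).Nonempty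

/-- `C` is a `λ`-club subset of `δ`: unbounded in `δ` and containing all of its
limit points of cofinality `λ` below `δ`. -/
def LClub (lam : Cardinal) (C : Set Ordinal) (δ : Ordinal) : Prop :=
  C ⊆ Set.Iio δ ∧ (∀ β < δ, ∃ γ ∈ C, β < γ) ∧
    ∀ β < δ, β.cof = lam → (∀ γ < β, ∃ ε ∈ C, γ < ε ∧ ε < β) → β ∈ C

/-- `S` is `λ`-stationary in `δ`: it meets every `λ`-club subset of `δ`. -/
def LStat (lam : Cardinal) (S : Set Ordinal) (δ : Ordinal) : Prop :=
  ∀ C, LClub lam C δ → (S ∩ C).Nonempty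

/-- `H(A) = {α ∈ S^κ_λ | D_α ⊆_* A ∩ α}`. -/
def Hmap (κ lam : Cardinal) (D : Ordinal → Set Ordinal) (A : Set Ordinal) : Set Ordinal :=
  {α | α < κ.ord ∧ α.cof = lam ∧ ∃ β < α, ∀ γ ∈ D α, β ≤ γ → γ ∈ A}

open Filter

theorem Ordinal.accPt_principal_iff {β : Ordinal} {S : Set Ordinal} :
    AccPt β (𝓟 S) ↔ β ≠ 0 ∧ ∀ γ < β, ∃ ε ∈ S, γ < ε ∧ ε < β := by
  simp [SuccOrder.accPt_principal, Set.Nonempty]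

theorem LClub.mem_of_accPt {lam : Cardinal} {C : Set Ordinal} {δ β : Ordinal}
    (hC : LClub lam C δ) (hβ : β < δ) (hcof : β.cof = lam) (hacc : AccPt β (𝓟 C)) : β ∈ C :=
  hC.2.2 β hβ hcof (Ordinal.accPt_principal_iff.1 hacc).2

/-- Adding `0` makes a final segment `λ`-closed also when `λ = 0`, as `cof 0 = 0`. -/
theorem lClub_insert_zero_Ioo (lam : Cardinal) {δ β : Ordinal} (hδ : Order.IsSuccLimit δ)
    (hβ : β < δ) : LClub lam (insert 0 (Ioo β δ)) δ := by
  refine ⟨insert_subset hδ.bot_lt fun x hx => hx.2, fun x hx => ?_, fun x hx _ hlim => ?_⟩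
  · exact ⟨Order.succ (max x β), .inr ⟨(le_max_right x β).trans_lt (Order.lt_succ _),
      hδ.succ_lt (max_lt hx hβ)⟩, (le_max_left x β).trans_lt (Order.lt_succ _)⟩
  · rcases eq_or_ne x 0 with rfl | hx0
    · exact .inl rfl
    · obtain ⟨ε, hε, hε0, hεx⟩ := hlim 0 (pos_iff_ne_zero.2 hx0)
      rcases hε with rfl | hε
      · exact (lt_irrefl 0 hε0).elim
      · exact .inr ⟨hε.1.trans hεx, hx⟩

/-- Unboundedness: `ω` iterations of "go above a point of `X` and a point of `Y`" stay below `δ`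
because `cof δ > ℵ₀`; their supremum is a limit point of both. -/
theorem isClubIn_Iio_inter_derivedSet_inter {δ : Ordinal} (hδ : ℵ₀ < δ.cof) {X Y : Set Ordinal}
    (hX : ∀ β < δ, (X ∩ Ioo β δ).Nonempty) (hY : ∀ β < δ, (Y ∩ Ioo β δ).Nonempty) :
    IsClubIn (Iio δ ∩ derivedSet X ∩ derivedSet Y) δ := by
  have hlim : Order.IsSuccLimit δ := Ordinal.one_lt_cof_iff.1 (one_lt_aleph0.trans hδ)
  refine ⟨fun x hx => hx.1.1, fun b hb => ?_, fun β hβ hβ0 hacc => ?_⟩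
  · have hstep : ∀ x, ∃ y, x < δ →
        y < δ ∧ (X ∩ Ioo x y).Nonempty ∧ (Y ∩ Ioo x y).Nonempty := by
      intro x
      by_cases hx : x < δ
      · obtain ⟨c, hcX, hxc, hcδ⟩ := hX x hx
        obtain ⟨a, haY, hxa, haδ⟩ := hY x hx
        exact ⟨Order.succ (max c a), fun _ => ⟨hlim.succ_lt (max_lt hcδ haδ),
          ⟨c, hcX, hxc, (le_max_left c a).trans_lt (Order.lt_succ _)⟩,
          ⟨a, haY, hxa, (le_max_right c a).trans_lt (Order.lt_succ _)⟩⟩⟩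
      · exact ⟨0, fun h => absurd h hx⟩
    choose f hf using hstep
    have hfδ : ∀ x < δ, f x < δ := fun x hx => (hf x hx).1
    set α := Ordinal.nfp f b
    have hαδ : α < δ := Ordinal.nfp_lt_ord hδ hfδ hb
    have hiter : ∀ n, f^[n] b < δ := fun n => (Ordinal.iterate_le_nfp f b n).trans_lt hαδ
    have hbα : b < α := by
      obtain ⟨x, -, hbx, hx⟩ := (hf b hb).2.1
      exact (hbx.trans hx).trans_le (Ordinal.iterate_le_nfp f b 1)
    have haccα : ∀ Z : Set Ordinal, (∀ x < δ, (Z ∩ Ioo x (f x)).Nonempty) →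
        α ∈ derivedSet Z := by
      intro Z hZ
      refine Ordinal.accPt_principal_iff.2 ⟨(zero_le.trans_lt hbα).ne', ?_⟩
      intro γ hγ
      obtain ⟨n, hn⟩ := Ordinal.lt_nfp_iff.1 hγ
      obtain ⟨ε, hεZ, hnε, hεn⟩ := hZ _ (hiter n)
      refine ⟨ε, hεZ, hn.trans hnε, hεn.trans_le ?_⟩
      rw [← Function.iterate_succ_apply' f n b]
      exact Ordinal.iterate_le_nfp f b (n + 1)
    exact ⟨α, ⟨⟨hαδ, haccα X fun x hx => (hf x hx).2.1⟩, haccα Y fun x hx => (hf x hx).2.2⟩, hbα⟩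
  · have hβE : β ∈ derivedSet (Iio δ ∩ derivedSet X ∩ derivedSet Y) :=
      Ordinal.accPt_principal_iff.2 ⟨hβ0, hacc⟩
    have hderiv : ∀ Z : Set Ordinal, derivedSet (derivedSet Z) ⊆ derivedSet Z :=
      fun Z => (isClosed_iff_derivedSet_subset _).1 (isClosed_derivedSet Z)
    exact ⟨⟨hβ, hderiv X (derivedSet_mono _ _ (fun x hx => hx.1.2) hβE)⟩,
      hderiv Y (derivedSet_mono _ _ (fun x hx => hx.2) hβE)⟩

section Hmap

variable {κ lam : Cardinal} {D : Ordinal → Set Ordinal} {A B : Set Ordinal} {α β : Ordinal}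

theorem pos_of_mem_Hmap (hα : α ∈ Hmap κ lam D A) : 0 < α :=
  let ⟨_, _, _, hβα, _⟩ := hα
  zero_le.trans_lt hβα

theorem mem_Hmap_of_diff_lt (hα : α ∈ Hmap κ lam D A) (hβα : β < α)
    (hbd : ∀ γ ∈ A, γ ∉ B → γ < β) : α ∈ Hmap κ lam D B := by
  obtain ⟨hακ, hαcof, β', hβ'α, hsub⟩ := hα
  refine ⟨hακ, hαcof, max β' β, max_lt hβ'α hβα, fun γ hγ hge => ?_⟩
  by_contra hγB
  exact (hbd γ (hsub γ hγ ((le_max_left _ _).trans hge)) hγB).not_ge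
    ((le_max_right _ _).trans hge)

theorem not_lStat_Hmap_diff_of_bounded (hκ : ℵ₀ ≤ κ) (hβ : β < κ.ord)
    (hbd : ∀ γ ∈ A, γ ∉ B → γ < β) : ¬ LStat lam (Hmap κ lam D A \ Hmap κ lam D B) κ.ord := by
  intro hstat
  obtain ⟨α, ⟨hαA, hαB⟩, hαC⟩ :=
    hstat _ (lClub_insert_zero_Ioo lam (Cardinal.isSuccLimit_ord hκ) hβ)
  rcases hαC with rfl | hαC
  · exact (pos_of_mem_Hmap hαA).ne rfl
  · exact hαB (mem_Hmap_of_diff_lt hαA hαC.1 hbd)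

theorem mem_Hmap_diff_of_eq_inter (hακ : α < κ.ord) (hαcof : α.cof = lam)
    (hacc : α ∈ derivedSet (A \ B)) (hD : (A \ B) ∩ Iio α = D α) :
    α ∈ Hmap κ lam D A \ Hmap κ lam D B := by
  obtain ⟨hα0, hlim⟩ := Ordinal.accPt_principal_iff.1 hacc
  refine ⟨⟨hακ, hαcof, 0, pos_iff_ne_zero.2 hα0, fun γ hγ _ => ?_⟩, ?_⟩
  · rw [← hD] at hγ
    exact hγ.1.1
  · rintro ⟨-, -, β, hβα, hsub⟩
    obtain ⟨ε, hεAB, hβε, hεα⟩ := hlim β hβα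
    exact hεAB.2 (hsub ε (hD ▸ ⟨hεAB, hεα⟩) hβε.le)

theorem lStat_Hmap_diff_of_unbounded (hκ : ℵ₀ < κ.ord.cof)
    (hdiamond : ∀ A ⊆ Iio κ.ord, StatIn {α | α < κ.ord ∧ α.cof = lam ∧ A ∩ Iio α = D α} κ.ord)
    (hA : A ⊆ Iio κ.ord) (hunb : ∀ β < κ.ord, ((A \ B) ∩ Ioo β κ.ord).Nonempty) :
    LStat lam (Hmap κ lam D A \ Hmap κ lam D B) κ.ord := by
  intro C hC
  have hCunb : ∀ β < κ.ord, (C ∩ Ioo β κ.ord).Nonempty := fun β hβ =>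
    let ⟨γ, hγC, hβγ⟩ := hC.2.1 β hβ
    ⟨γ, hγC, hβγ, hC.1 hγC⟩
  obtain ⟨α, ⟨hακ, hαcof, hD⟩, ⟨-, hαC⟩, hαAB⟩ :=
    hdiamond (A \ B) (sdiff_subset.trans hA) _ (isClubIn_Iio_inter_derivedSet_inter hκ hCunb hunb)
  exact ⟨α, mem_Hmap_diff_of_eq_inter hακ hαcof hαAB hD, hC.mem_of_accPt hακ hαcof hαC⟩

end Hmap

theorem diamond_embedding_general (κ lam : Cardinal) (hreg : κ.IsRegular) (hunc : ℵ₀ < κ)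
    (D : Ordinal → Set Ordinal)
    (hdiamond : ∀ A ⊆ Set.Iio κ.ord,
      StatIn {α | α < κ.ord ∧ α.cof = lam ∧ A ∩ Set.Iio α = D α} κ.ord) :
    ∀ A ⊆ Set.Iio κ.ord, ∀ B ⊆ Set.Iio κ.ord,
      ((∃ β < κ.ord, ∀ γ ∈ A, γ ∉ B → γ < β) ↔
        ¬ LStat lam (Hmap κ lam D A \ Hmap κ lam D B) κ.ord) := by
  intro A hA B _
  refine ⟨fun ⟨β, hβ, hbd⟩ => not_lStat_Hmap_diff_of_bounded hunc.le hβ hbd, fun hns => ?_⟩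
  by_contra hbd
  refine hns (lStat_Hmap_diff_of_unbounded (by rwa [hreg.cof_ord]) hdiamond hA fun β hβ => ?_)
  push Not at hbd
  obtain ⟨γ, hγA, hγB, hβγ⟩ := hbd (Order.succ β) ((Cardinal.isSuccLimit_ord hunc.le).succ_lt hβ)
  exact ⟨γ, ⟨hγA, hγB⟩, Order.succ_le_iff.1 hβγ, hA hγA⟩

/-- given `◊_κ(S^κ_λ)`, the map `H` embeds `⟨P(κ), ⊆_*⟩` into
`⟨P(κ), ⊆_{NS(λ)}⟩`: `A \ B` is bounded iff `H(A) \ H(B)` is not `λ`-stationary. -/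
theorem diamond_embedding (κ lam : Cardinal) (hreg : κ.IsRegular) (hunc : ℵ₀ < κ)
    (hlam : lam.IsRegular) (hlt : lam < κ)
    (D : Ordinal → Set Ordinal)
    (hDsub : ∀ α, α < κ.ord → α.cof = lam → D α ⊆ Set.Iio α)
    (hdiamond : ∀ A ⊆ Set.Iio κ.ord,
      StatIn {α | α < κ.ord ∧ α.cof = lam ∧ A ∩ Set.Iio α = D α} κ.ord) :
    ∀ A ⊆ Set.Iio κ.ord, ∀ B ⊆ Set.Iio κ.ord,
      ((∃ β < κ.ord, ∀ γ ∈ A, γ ∉ B → γ < β) ↔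
        ¬ LStat lam (Hmap κ lam D A \ Hmap κ lam D B) κ.ord) :=
  diamond_embedding_general κ lam hreg hunc D hdiamond
end
end

section
/- Let κ be regular uncountable. Suppose the non-stationary ideal on κ is not κ^+-saturated, witnessed by a sequence ⟨A_i : i < κ^+⟩ of stationary subsets of κ such that A_i ∩ A_j is non-stationary for all i ≠ j. Then there exists a sequence ⟨B_α : α < κ^+⟩ of subsets of κ that is strictly increasing modulo the non-stationary ideal: for α < β < κ^+, B_α \ B_β is non-stationary and B_β \ B_α is stationary. -/
/-!
Fix, for each `α < κ⁺`, a map `g_α` from `κ` onto `α`, and let `B_α` be the diagonal union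
`∇_{x<κ} A_{g_α(x)}`. Everything rests on normality of the club filter: it is closed under
diagonal intersections of `κ` many members, proved by the usual `ω`-iteration using
`cof κ > ℵ₀`.

For `α < β`, each `g_α(x)` equals `g_β(y)` for some `y`; once `ξ > y`, a witness `x < ξ`
for `ξ ∈ B_α` yields the witness `y` for `ξ ∈ B_β`. Normality makes this hold for almost all
`ξ`, so `B_α \ B_β` is non-stationary. Conversely `A_α` is almost disjoint from each
`A_{g_α(x)}`, so by normality almost every `ξ ∈ A_α` avoids `B_α`; above the `g_β`-index of
`α` it lies in `B_β`.
-/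

open Cardinal Set
open scoped Classical

noncomputable section

open Filter Ordinal

variable {δ β : Ordinal} {C : Set Ordinal} {f : Ordinal → Ordinal}

theorem isSuccLimit_of_aleph0_lt_cof (hcof : ℵ₀ < δ.cof) : Order.IsSuccLimit δ :=
  one_lt_cof_iff.1 (one_lt_aleph0.trans hcof)

theorem isClubIn_Ioo (hδ : Order.IsSuccLimit δ) {j : Ordinal} (hj : j < δ) :
    IsClubIn (Ioo j δ) δ := by
  refine ⟨fun _ h => h.2, fun β hβ => ?_, fun β hβ hβ0 hlim => ⟨?_, hβ⟩⟩
  · exact ⟨Order.succ (max β j), ⟨(le_max_right β j).trans_lt (Order.lt_succ _),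
      hδ.succ_lt (max_lt hβ hj)⟩, (le_max_left β j).trans_lt (Order.lt_succ _)⟩
  · by_contra! hβj
    obtain ⟨ε, hε, -, hεβ⟩ := hlim 0 (pos_iff_ne_zero.2 hβ0)
    exact (hε.1.trans (hεβ.trans_le hβj)).false

theorem IsClubIn.csInf_inter_Ioi_mem (hC : IsClubIn C δ) {η : Ordinal} (hη : η < δ) :
    sInf (C ∩ Ioi η) ∈ C ∩ Ioi η :=
  csInf_mem (hC.2.1 η hη)

theorem strictMono_iterate_apply (hinfl : ∀ η < δ, η < f η)
    (hmaps : MapsTo f (Iio δ) (Iio δ)) (hβ : β < δ) : StrictMono fun n => f^[n] β :=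
  strictMono_nat_of_lt_succ fun n => by
    rw [Function.iterate_succ_apply']
    exact hinfl _ (hmaps.iterate n hβ)

theorem iterate_lt_nfp (hinfl : ∀ η < δ, η < f η) (hmaps : MapsTo f (Iio δ) (Iio δ))
    (hβ : β < δ) (n : ℕ) : f^[n] β < nfp f β :=
  (strictMono_iterate_apply hinfl hmaps hβ n.lt_succ_self).trans_le (iterate_le_nfp f β _)

theorem IsClubIn.nfp_mem (hC : IsClubIn C δ) (hcof : ℵ₀ < δ.cof)
    (hinfl : ∀ η < δ, η < f η) (hmaps : MapsTo f (Iio δ) (Iio δ)) (hβ : β < δ)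
    (hC' : ∀ᶠ n in atTop, ∃ ε ∈ C, f^[n] β < ε ∧ ε ≤ f (f^[n] β)) :
    nfp f β ∈ C := by
  have hlt := iterate_lt_nfp hinfl hmaps hβ
  refine hC.2.2 _ (nfp_lt_ord hcof (fun _ h => hmaps h) hβ) (hlt 0).ne_bot fun γ hγ => ?_
  obtain ⟨n, hn⟩ := lt_nfp_iff.1 hγ
  obtain ⟨m, ⟨ε, hεC, hmε, hεm⟩, hnm⟩ := (hC'.and (eventually_ge_atTop n)).exists
  have hnm' := (strictMono_iterate_apply hinfl hmaps hβ).monotone hnm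
  refine ⟨ε, hεC, (hn.trans_le hnm').trans hmε, hεm.trans_lt ?_⟩
  simpa only [Function.iterate_succ_apply'] using hlt (m + 1)

theorem isClubIn_biInter (hcof : ℵ₀ < δ.cof) {ξ : Ordinal} (hξ : ξ.card < δ.cof)
    {F : Ordinal → Set Ordinal} (hF : ∀ x < ξ, IsClubIn (F x) δ) :
    IsClubIn {η | η < δ ∧ ∀ x < ξ, η ∈ F x} δ := by
  refine ⟨fun _ h => h.1, fun β hβ => ?_, fun β hβ hβ0 hlim => ⟨hβ, fun x hx => ?_⟩⟩
  · let next η := max (Order.succ η) (⨆ x : Iio ξ, sInf (F x ∩ Ioi η))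
    have hinfl : ∀ η < δ, η < next η := fun η _ =>
      (Order.lt_succ η).trans_le (le_max_left _ _)
    have hmaps : MapsTo next (Iio δ) (Iio δ) := fun η (hη : η < δ) =>
      max_lt ((isSuccLimit_of_aleph0_lt_cof hcof).succ_lt hη) <|
        lift_iSup_lt_of_lt_cof
          (by simpa [Cardinal.mk_Iio_ordinal, ← lift_cof, ← lift_card] using hξ)
          fun x => (hF x x.2).1 ((hF x x.2).csInf_inter_Ioi_mem hη).1
    refine ⟨nfp next β, ⟨nfp_lt_ord hcof (fun _ h => hmaps h) hβ, fun x hx => ?_⟩,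
      iterate_lt_nfp hinfl hmaps hβ 0⟩
    refine (hF x hx).nfp_mem hcof hinfl hmaps hβ (Eventually.of_forall fun n => ?_)
    have hn := (hF x hx).csInf_inter_Ioi_mem (hmaps.iterate n hβ)
    exact ⟨_, hn.1, hn.2, (Ordinal.le_iSup (fun x : Iio ξ => sInf (F x ∩ Ioi (next^[n] β)))
      ⟨x, hx⟩).trans (le_max_right _ _)⟩
  · refine (hF x hx).2.2 β hβ hβ0 fun γ hγ => ?_
    obtain ⟨ε, hε, hγε, hεβ⟩ := hlim γ hγ
    exact ⟨ε, hε.2 x hx, hγε, hεβ⟩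

theorem IsClubIn.exists_subset_inter (hcof : ℵ₀ < δ.cof) {C₁ C₂ : Set Ordinal}
    (h₁ : IsClubIn C₁ δ) (h₂ : IsClubIn C₂ δ) :
    ∃ C, IsClubIn C δ ∧ C ⊆ C₁ ∩ C₂ := by
  have h2 : (2 : Ordinal).card < δ.cof := by
    simpa using (natCast_lt_aleph0 (n := 2)).trans hcof
  refine ⟨_, isClubIn_biInter (F := fun x => if x = 0 then C₁ else C₂) hcof h2 fun x _ => ?_,
    fun η hη => ⟨?_, ?_⟩⟩
  · split_ifs
    exacts [h₁, h₂]
  · simpa using hη.2 0 two_pos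
  · simpa using hη.2 1 one_lt_two

theorem isClubIn_diagInter (hcof : ℵ₀ < δ.cof) (hcard : ∀ ξ < δ, ξ.card < δ.cof)
    {F : Ordinal → Set Ordinal} (hF : ∀ x < δ, IsClubIn (F x) δ) :
    IsClubIn {ξ | ξ < δ ∧ ∀ x < ξ, ξ ∈ F x} δ := by
  refine ⟨fun _ h => h.1, fun β hβ => ?_, fun β hβ hβ0 hlim => ⟨hβ, fun x hx => ?_⟩⟩
  · have hD : ∀ ξ < δ, IsClubIn {η | η < δ ∧ ∀ x < ξ, η ∈ F x} δ := fun ξ hξ =>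
      isClubIn_biInter hcof (hcard ξ hξ) fun x hx => hF x (hx.trans hξ)
    let e ξ := sInf ({η | η < δ ∧ ∀ x < ξ, η ∈ F x} ∩ Ioi ξ)
    have he : ∀ ξ < δ, e ξ ∈ _ ∩ Ioi ξ := fun ξ hξ =>
      (hD ξ hξ).csInf_inter_Ioi_mem hξ
    have hinfl : ∀ η < δ, η < e η := fun η hη => (he η hη).2
    have hmaps : MapsTo e (Iio δ) (Iio δ) := fun η hη => (he η hη).1.1
    have hL := nfp_lt_ord hcof (fun _ h => hmaps h) hβ
    refine ⟨nfp e β, ⟨hL, fun x hx => ?_⟩, iterate_lt_nfp hinfl hmaps hβ 0⟩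
    obtain ⟨n, hn⟩ := lt_nfp_iff.1 hx
    refine (hF x (hx.trans hL)).nfp_mem hcof hinfl hmaps hβ
      (eventually_atTop.2 ⟨n, fun m hm => ?_⟩)
    have hxm := hn.trans_le ((strictMono_iterate_apply hinfl hmaps hβ).monotone hm)
    have hem := he _ (hmaps.iterate m hβ)
    exact ⟨_, hem.1.2 x hxm, hem.2, le_rfl⟩
  · refine (hF x (hx.trans hβ)).2.2 β hβ hβ0 fun γ hγ => ?_
    obtain ⟨ε, hε, hγε, hεβ⟩ := hlim (max γ x) (max_lt hγ hx)
    exact ⟨ε, hε.2 x ((le_max_right γ x).trans_lt hγε), (le_max_left γ x).trans_lt hγε,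
      hεβ⟩

/-- Unless `ℵ₀ < cof δ`, two clubs in `δ` may be disjoint and this filter may be `⊥`. -/
def clubFilter (δ : Ordinal) : Filter Ordinal :=
  ⨅ C ∈ {C | IsClubIn C δ}, 𝓟 C

theorem IsClubIn.mem_clubFilter (hC : IsClubIn C δ) : C ∈ clubFilter δ :=
  mem_iInf_of_mem C (mem_iInf_of_mem hC (mem_principal_self C))

theorem mem_clubFilter (hcof : ℵ₀ < δ.cof) {s : Set Ordinal} :
    s ∈ clubFilter δ ↔ ∃ C, IsClubIn C δ ∧ C ⊆ s := by
  have hδ := isSuccLimit_of_aleph0_lt_cof hcof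
  rw [clubFilter, mem_biInf_of_directed]
  · simp only [mem_ofPred_eq, mem_principal]
  · intro C₁ h₁ C₂ h₂
    obtain ⟨C, hC, hsub⟩ := h₁.exists_subset_inter hcof h₂
    exact ⟨C, hC, principal_mono.2 (hsub.trans inter_subset_left),
      principal_mono.2 (hsub.trans inter_subset_right)⟩
  · exact ⟨_, isClubIn_Ioo hδ hδ.bot_lt⟩

theorem Ioo_mem_clubFilter (hδ : Order.IsSuccLimit δ) {j : Ordinal} (hj : j < δ) :
    Ioo j δ ∈ clubFilter δ :=
  (isClubIn_Ioo hδ hj).mem_clubFilter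

theorem statIn_iff_frequently (hcof : ℵ₀ < δ.cof) {S : Set Ordinal} :
    StatIn S δ ↔ ∃ᶠ ξ in clubFilter δ, ξ ∈ S := by
  rw [frequently_iff]
  refine ⟨fun hS U hU => ?_, fun hS C hC => ?_⟩
  · obtain ⟨C, hC, hCU⟩ := (mem_clubFilter hcof).1 hU
    obtain ⟨ξ, hξS, hξC⟩ := hS C hC
    exact ⟨ξ, hCU hξC, hξS⟩
  · obtain ⟨ξ, hξC, hξS⟩ := hS hC.mem_clubFilter
    exact ⟨ξ, hξS, hξC⟩

theorem not_statIn_iff_eventually (hcof : ℵ₀ < δ.cof) {S : Set Ordinal} :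
    ¬ StatIn S δ ↔ ∀ᶠ ξ in clubFilter δ, ξ ∉ S := by
  rw [statIn_iff_frequently hcof, not_frequently]

theorem eventually_clubFilter_forall_lt (hcof : ℵ₀ < δ.cof)
    (hcard : ∀ ξ < δ, ξ.card < δ.cof) {P : Ordinal → Ordinal → Prop}
    (hP : ∀ x < δ, ∀ᶠ ξ in clubFilter δ, P x ξ) :
    ∀ᶠ ξ in clubFilter δ, ∀ x < ξ, P x ξ := by
  choose! C hC hCP using fun x hx => (mem_clubFilter hcof).1 (hP x hx)
  exact (mem_clubFilter hcof).2 ⟨_, isClubIn_diagInter hcof hcard hC,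
    fun ξ hξ x hx => hCP x (hx.trans hξ.1) (hξ.2 x hx)⟩

/-- `∇_{x < δ} A (g x)` over the indices with `g x < α`: for `g` mapping `δ` onto `α` this is
the paper's `B_α`, and the guard `g x < α` keeps it meaningful for an arbitrary `g`. -/
def diagUnion (δ : Ordinal) (A : Ordinal → Set Ordinal) (g : Ordinal → Ordinal)
    (α : Ordinal) : Set Ordinal :=
  {ξ | ξ < δ ∧ ∃ x < ξ, g x < α ∧ ξ ∈ A (g x)}

section DiagUnion

variable {A : Ordinal → Set Ordinal} {g g' : Ordinal → Ordinal} {α α' : Ordinal}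

theorem not_statIn_diagUnion_diff (hcof : ℵ₀ < δ.cof) (hcard : ∀ ξ < δ, ξ.card < δ.cof)
    (hα : α ≤ α') (hg' : SurjOn g' (Iio δ) (Iio α')) :
    ¬ StatIn (diagUnion δ A g α \ diagUnion δ A g' α') δ := by
  have hδ := isSuccLimit_of_aleph0_lt_cof hcof
  have hidx : ∀ x < δ, ∀ᶠ ξ in clubFilter δ, g x < α → ∃ y < ξ, g' y = g x :=
    fun x _ => eventually_imp_distrib_left.2 fun hgx => by
      obtain ⟨y, hy, hyx⟩ := hg' (hgx.trans_le hα)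
      filter_upwards [Ioo_mem_clubFilter hδ hy] with ξ hξ using ⟨y, hξ.1, hyx⟩
  rw [not_statIn_iff_eventually hcof]
  filter_upwards [eventually_clubFilter_forall_lt hcof hcard hidx]
  rintro ξ hξ ⟨⟨hξδ, x, hxξ, hgx, hξA⟩, hξ'⟩
  obtain ⟨y, hyξ, hyx⟩ := hξ x hxξ hgx
  exact hξ' ⟨hξδ, y, hyξ, hyx ▸ hgx.trans_le hα, hyx ▸ hξA⟩

theorem statIn_diagUnion_diff (hcof : ℵ₀ < δ.cof) (hcard : ∀ ξ < δ, ξ.card < δ.cof)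
    {γ : Ordinal} (hA : StatIn (A γ) δ) (hγ : γ ∈ g' '' Iio δ) (hγα' : γ < α')
    (hdisj : ∀ x, g x < α → ¬ StatIn (A (g x) ∩ A γ) δ) :
    StatIn (diagUnion δ A g' α' \ diagUnion δ A g α) δ := by
  obtain ⟨y₀, hy₀, rfl⟩ := hγ
  have hsep : ∀ x < δ, ∀ᶠ ξ in clubFilter δ, g x < α → ξ ∉ A (g x) ∩ A (g' y₀) :=
    fun x _ => eventually_imp_distrib_left.2 fun hgx =>
      (not_statIn_iff_eventually hcof).1 (hdisj x hgx)
  rw [statIn_iff_frequently hcof] at hA ⊢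
  refine (hA.and_eventually ((eventually_clubFilter_forall_lt hcof hcard hsep).and
    (Ioo_mem_clubFilter (isSuccLimit_of_aleph0_lt_cof hcof) hy₀))).mono ?_
  rintro ξ ⟨hξA, hξsep, hy₀ξ, hξδ⟩
  refine ⟨⟨hξδ, y₀, hy₀ξ, hγα', hξA⟩, ?_⟩
  rintro ⟨-, x, hxξ, hgx, hξx⟩
  exact hξsep x hxξ hgx ⟨hξx, hξA⟩

end DiagUnion

theorem exists_surjOn_Iio_ord {κ : Cardinal} {α : Ordinal} (h : α.card ≤ κ) :
    ∃ g : Ordinal → Ordinal, SurjOn g (Iio κ.ord) (Iio α) := by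
  obtain ⟨e⟩ : #(Iio α) ≤ #(Iio κ.ord) := by
    rw [Cardinal.mk_Iio_ordinal, Cardinal.mk_Iio_ordinal, card_ord, Cardinal.lift_le]
    exact h
  let f γ : Ordinal := if hγ : γ < α then e ⟨γ, hγ⟩ else 0
  have hf : ∀ γ (hγ : γ < α), f γ = e ⟨γ, hγ⟩ := fun γ hγ => dif_pos hγ
  have hinj : InjOn f (Iio α) := fun γ hγ γ' hγ' h => by
    rw [hf γ hγ, hf γ' hγ'] at h
    exact congrArg Subtype.val (e.injective (Subtype.ext h))
  refine ⟨_, hinj.leftInvOn_invFunOn.surjOn fun γ hγ => ?_⟩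
  rw [mem_Iio, hf γ hγ]
  exact (e ⟨γ, hγ⟩).2

/-- if the non-stationary ideal on `κ` is not `κ⁺`-saturated, witnessed by
`κ⁺` many stationary sets with pairwise non-stationary intersections, then there is a
`κ⁺`-chain of subsets of `κ` strictly increasing modulo the non-stationary ideal. -/
theorem nonsaturated_chain (κ : Cardinal) (hreg : κ.IsRegular) (hunc : ℵ₀ < κ)
    (A : Ordinal → Set Ordinal)
    (hA : ∀ i < (Order.succ κ).ord, A i ⊆ Set.Iio κ.ord ∧ StatIn (A i) κ.ord)
    (hpair : ∀ i < (Order.succ κ).ord, ∀ j < (Order.succ κ).ord, i ≠ j →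
      ¬ StatIn (A i ∩ A j) κ.ord) :
    ∃ B : Ordinal → Set Ordinal,
      (∀ i < (Order.succ κ).ord, B i ⊆ Set.Iio κ.ord) ∧
      ∀ i j, i < j → j < (Order.succ κ).ord →
        ¬ StatIn (B i \ B j) κ.ord ∧ StatIn (B j \ B i) κ.ord := by
  have hcof : ℵ₀ < κ.ord.cof := by rwa [hreg.cof_ord]
  have hcard : ∀ ξ < κ.ord, ξ.card < κ.ord.cof := fun ξ hξ => by
    rw [hreg.cof_ord]
    exact lt_ord.1 hξ
  choose! G hG using fun α (hα : α < (Order.succ κ).ord) =>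
    exists_surjOn_Iio_ord (Order.lt_succ_iff.1 (lt_ord.1 hα))
  refine ⟨fun α => diagUnion κ.ord A (G α) α, fun _ _ _ hξ => hξ.1, fun i j hij hj =>
    ⟨not_statIn_diagUnion_diff hcof hcard hij.le (hG j hj), ?_⟩⟩
  have hi := hij.trans hj
  exact statIn_diagUnion_diff hcof hcard (hA i hi).2 (hG j hj hij) hij
    fun x hx => hpair _ (hx.trans hi) i hi hx.ne
end
end

section
/- Let κ be an uncountable regular cardinal with κ^{<κ} = κ, and let S ⊆ lim(κ) be non-stationary, with C a club subset of κ disjoint from S. Define f : 2^κ → 2^κ by f(η)(α) = η(OTP(α ∩ C)) if α ∈ C and f(η)(α) = 0 otherwise. Then f is a continuous reduction of E_0 to E_S: for all η, ξ ∈ 2^κ, {α : η(α) ≠ ξ(α)} is bounded iff f(η) E_S f(ξ), where E_S = E_S^* ∩ E_0 and η E_S^* ξ iff for every α ∈ S there is β < α with η△ξ constant on (β, α). -/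
open Cardinal Set
open scoped Classical

noncomputable section

/-- The order type of a (bounded) set of ordinals, as an ordinal. -/
noncomputable def otp (s : Set Ordinal) : Ordinal :=
  sInf {o : Ordinal | Ordinal.lift.{1, 0} o =
    Ordinal.type (Subrel ((· < ·) : Ordinal → Ordinal → Prop) (· ∈ s))}

/-!
Write `ρ α` for the order type of `C ∩ α`. On the club `C` of the regular `κ`, `ρ` is an order
isomorphism onto `κ`, and `f η` copies `η` along it. Hence `f η` below `α` depends only on `η`
below `α` (continuity), and `f η`, `f ξ` agree on a tail of `κ` iff `η`, `ξ` do. Every `α ∈ S` is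
a nonzero ordinal outside the closed set `C`, so `C ∩ (β, α) = ∅` for some `β < α`; as `f η`
vanishes off `C`, `f η △ f ξ` is constantly `0` there, and `E_S^*` holds between all images.
-/

section OrderType

variable {s t : Set Ordinal.{0}} {a b ι : Ordinal.{0}}

local notation "typeLTOn " s => Ordinal.type (Subrel ((· < ·) : Ordinal → Ordinal → Prop) (· ∈ s))

theorem type_subrel_le_of_subset (h : s ⊆ t) : (typeLTOn s) ≤ typeLTOn t :=
  (Subrel.inclusionEmbedding _ h).ordinal_type_le

theorem lift_otp (h : s ⊆ Iio a) : Ordinal.lift.{1} (otp s) = typeLTOn s :=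
  csInf_mem <| Ordinal.mem_range_lift_of_le <|
    (type_subrel_le_of_subset h).trans_eq (Ordinal.typein_ordinal a)

theorem otp_inter_Iio_le (s : Set Ordinal) (a : Ordinal) : otp (s ∩ Iio a) ≤ a := by
  rw [← Ordinal.lift_le.{1}, lift_otp inter_subset_right, ← Ordinal.typein_ordinal]
  exact type_subrel_le_of_subset inter_subset_right

theorem monotone_otp_inter_Iio : Monotone fun a => otp (s ∩ Iio a) := fun a b hab => by
  rw [← Ordinal.lift_le.{1}, lift_otp inter_subset_right, lift_otp inter_subset_right]
  exact type_subrel_le_of_subset (inter_subset_inter_right s (Iio_subset_Iio hab))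

theorem lift_otp_inter_Iio_eq_typein (hb : b ∈ s) (hba : b < a) :
    Ordinal.lift.{1} (otp (s ∩ Iio b)) =
      Ordinal.typein (Subrel ((· < ·) : Ordinal → Ordinal → Prop) (· ∈ s ∩ Iio a))
        ⟨b, hb, hba⟩ := by
  rw [lift_otp inter_subset_right, ← Ordinal.type_subrel]
  exact RelIso.ordinalType_congr
    ⟨⟨fun x => ⟨⟨x.1, x.2.1, x.2.2.trans hba⟩, x.2.2⟩, fun y => ⟨y.1.1, y.1.2.1, y.2⟩,
      fun _ => rfl, fun _ => rfl⟩, Iff.rfl⟩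

theorem otp_inter_Iio_lt_of_mem (hb : b ∈ s) (hba : b < a) :
    otp (s ∩ Iio b) < otp (s ∩ Iio a) := by
  rw [← Ordinal.lift_lt.{1}, lift_otp_inter_Iio_eq_typein hb hba, lift_otp inter_subset_right]
  exact Ordinal.typein_lt_type _ _

theorem exists_mem_otp_inter_Iio_eq (h : ι < otp (s ∩ Iio a)) :
    ∃ b ∈ s, b < a ∧ otp (s ∩ Iio b) = ι := by
  rw [← Ordinal.lift_lt.{1}, lift_otp inter_subset_right] at h
  obtain ⟨⟨b, hb, hba⟩, hbι⟩ := Ordinal.typein_surj _ h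
  exact ⟨b, hb, hba, Ordinal.lift_inj.1 ((lift_otp_inter_Iio_eq_typein hb hba).trans hbι)⟩

end OrderType

section Club

variable {κ : Cardinal.{0}} {C : Set Ordinal.{0}}

-- The elements of `C` of rank below `ι` are fewer than `κ`, hence bounded below `κ.ord`.
theorem exists_mem_otp_inter_Iio_eq_of_unbounded (hreg : κ.IsRegular) (hCκ : C ⊆ Iio κ.ord)
    (hCunb : ∀ β < κ.ord, ∃ γ ∈ C, β < γ) {ι : Ordinal} (hι : ι < κ.ord) :
    ∃ α ∈ C, otp (C ∩ Iio α) = ι := by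
  set low := {α ∈ C | otp (C ∩ Iio α) < ι}
  have hinj : Function.Injective fun α : low => (⟨otp (C ∩ Iio α), α.2.2⟩ : Iio ι) :=
    have hmono : StrictMonoOn (fun a => otp (C ∩ Iio a)) C :=
      fun b hb _ _ hba => otp_inter_Iio_lt_of_mem hb hba
    fun α β h => Subtype.ext (hmono.injOn α.2.1 β.2.1 (congrArg Subtype.val h))
  have hcard : #low < (Ordinal.lift.{1} κ.ord).cof :=
    calc #low ≤ #(Iio ι) := mk_le_of_injective hinj
      _ = Cardinal.lift.{1} ι.card := mk_Iio_ordinal ι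
      _ < Cardinal.lift.{1} κ := Cardinal.lift_lt.2 (lt_ord.1 hι)
      _ = (Ordinal.lift.{1} κ.ord).cof := by rw [← Ordinal.lift_cof, hreg.cof_ord]
  obtain ⟨α, hαC, hlowα⟩ := hCunb _ (Ordinal.sSup_lt_of_lt_cof hcard fun β hβ => hCκ hβ.1)
  have hbdd : BddAbove low := ⟨κ.ord, fun β hβ => (hCκ hβ.1).le⟩
  have hια : ι ≤ otp (C ∩ Iio α) := not_lt.1 fun h => (le_csSup hbdd ⟨hαC, h⟩).not_gt hlowα
  rcases hια.eq_or_lt with h | h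
  · exact ⟨α, hαC, h.symm⟩
  · obtain ⟨β, hβC, -, hβ⟩ := exists_mem_otp_inter_Iio_eq h
    exact ⟨β, hβC, hβ⟩

theorem IsClubIn.exists_forall_notMem_Ioo {δ α : Ordinal} (hC : IsClubIn C δ) (hαδ : α < δ)
    (hα : α ≠ 0) (hαC : α ∉ C) : ∃ β < α, ∀ γ ∈ C, γ ∉ Ioo β α := by
  by_contra! h
  exact hαC (hC.2.2 α hαδ hα h)

theorem eStar_of_forall_notMem_eq_false {δ : Ordinal} {S : Set Ordinal} (hC : IsClubIn C δ)
    (hS : S ⊆ Ioo 0 δ) (hCS : Disjoint C S) {η ξ : Ordinal → Bool}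
    (hη : ∀ γ ∉ C, η γ = false) (hξ : ∀ γ ∉ C, ξ γ = false) : EStar S η ξ := by
  intro α hα
  obtain ⟨β, hβα, hβ⟩ :=
    hC.exists_forall_notMem_Ioo (hS hα).2 (hS hα).1.ne' (hCS.notMem_of_mem_right hα)
  refine ⟨β, hβα, false, fun γ hβγ hγα => ?_⟩
  have hγ : γ ∉ C := fun h => hβ γ h ⟨hβγ, hγα⟩
  rw [hη γ hγ, hξ γ hγ]
  rfl

end Club

theorem continuous_gbTop_of_forall_lt {κ : Cardinal} {X Y : Type*}
    {F : (Ordinal → X) → Ordinal → Y}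
    (hF : ∀ α η η', (∀ β < α, η β = η' β) → ∀ β < α, F η β = F η' β) :
    @Continuous _ _ (gbTop κ X) (gbTop κ Y) F := by
  let _ := gbTop κ X
  let _ := gbTop κ Y
  apply continuous_generateFrom_iff.2
  rintro _ ⟨α, hα, p, rfl⟩
  refine isOpen_iff_forall_mem_open.2 fun η hη => ⟨{η' | ∀ β < α, η' β = η β}, ?_, ?_, ?_⟩
  · exact fun η' h β hβ => (hF α η' η h β hβ).trans (hη β hβ)
  · exact .basic _ ⟨α, hα, η, rfl⟩
  · exact fun _ _ => rfl

/-- `copyAlong C η` puts `η ι` at the `ι`-th element of `C`, and `false` off `C`. -/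
def copyAlong (C : Set Ordinal) (η : Ordinal → Bool) : Ordinal → Bool :=
  fun α => if α ∈ C then η (otp (C ∩ Iio α)) else false

section CopyAlong

variable {κ : Cardinal.{0}} {C : Set Ordinal.{0}}

theorem continuous_copyAlong :
    @Continuous _ _ (gbTop κ Bool) (gbTop κ Bool) (copyAlong C) := by
  refine continuous_gbTop_of_forall_lt fun α η η' h β hβ => ?_
  by_cases hβC : β ∈ C
  · simp only [copyAlong, if_pos hβC]
    exact h _ ((otp_inter_Iio_le C β).trans_lt hβ)
  · simp only [copyAlong, if_neg hβC]

theorem e0_copyAlong_iff (hreg : κ.IsRegular) (hCκ : C ⊆ Iio κ.ord)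
    (hCunb : ∀ β < κ.ord, ∃ γ ∈ C, β < γ) {η ξ : Ordinal → Bool} :
    E0 κ (copyAlong C η) (copyAlong C ξ) ↔ E0 κ η ξ := by
  constructor
  · rintro ⟨β₀, hβ₀, h⟩
    refine ⟨otp (C ∩ Iio β₀), (otp_inter_Iio_le C β₀).trans_lt hβ₀, fun ι hι hικ => ?_⟩
    obtain ⟨α, hαC, rfl⟩ := exists_mem_otp_inter_Iio_eq_of_unbounded hreg hCκ hCunb hικ
    have hβ₀α : β₀ ≤ α := not_lt.1 fun hαβ₀ => (otp_inter_Iio_lt_of_mem hαC hαβ₀).not_ge hι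
    simpa only [copyAlong, if_pos hαC] using h α hβ₀α (hCκ hαC)
  · rintro ⟨ι₀, hι₀, h⟩
    obtain ⟨β₀, hβ₀C, rfl⟩ := exists_mem_otp_inter_Iio_eq_of_unbounded hreg hCκ hCunb hι₀
    refine ⟨β₀, hCκ hβ₀C, fun α hβ₀α hακ => ?_⟩
    by_cases hαC : α ∈ C
    · simp only [copyAlong, if_pos hαC]
      exact h _ (monotone_otp_inter_Iio hβ₀α) ((otp_inter_Iio_le C α).trans_lt hακ)
    · simp only [copyAlong, if_neg hαC]

end CopyAlong

theorem E0_reducible_to_ES_of_nonstationary_general (κ : Cardinal) (hreg : κ.IsRegular)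
    (S : Set Ordinal) (hS : S ⊆ {β | β < κ.ord ∧ Order.IsSuccLimit β})
    (C : Set Ordinal) (hC : IsClubIn C κ.ord) (hCS : Disjoint C S) :
    @Continuous _ _ (gbTop κ Bool) (gbTop κ Bool)
      (fun η α => if α ∈ C then η (otp (C ∩ Set.Iio α)) else false) ∧
    ∀ η ξ : Ordinal → Bool,
      E0 κ η ξ ↔
        (EStar S (fun α => if α ∈ C then η (otp (C ∩ Set.Iio α)) else false)
            (fun α => if α ∈ C then ξ (otp (C ∩ Set.Iio α)) else false) ∧
          E0 κ (fun α => if α ∈ C then η (otp (C ∩ Set.Iio α)) else false)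
            (fun α => if α ∈ C then ξ (otp (C ∩ Set.Iio α)) else false)) := by
  have hSIoo : S ⊆ Ioo 0 κ.ord := fun α hα => ⟨(hS hα).2.pos, (hS hα).1⟩
  refine ⟨continuous_copyAlong, fun η ξ => ?_⟩
  have hEStar : EStar S (copyAlong C η) (copyAlong C ξ) :=
    eStar_of_forall_notMem_eq_false hC hSIoo hCS (fun _ h => if_neg h) (fun _ h => if_neg h)
  exact (e0_copyAlong_iff hreg hC.1 hC.2.1).symm.trans (and_iff_right hEStar).symm

/-- if `S` is non-stationary, witnessed by a club `C` disjoint from `S`,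
then `η ↦ (α ↦ η(OTP(C ∩ α))` for `α ∈ C`, else `0)` is a continuous reduction of `E_0`
to `E_S = E_S^* ∩ E_0`. -/
theorem E0_reducible_to_ES_of_nonstationary (κ : Cardinal) (hreg : κ.IsRegular)
    (hunc : ℵ₀ < κ) (hpow : κ ^< κ = κ)
    (S : Set Ordinal) (hS : S ⊆ {β | β < κ.ord ∧ Order.IsSuccLimit β})
    (C : Set Ordinal) (hC : IsClubIn C κ.ord) (hCS : Disjoint C S) :
    @Continuous _ _ (gbTop κ Bool) (gbTop κ Bool)
      (fun η α => if α ∈ C then η (otp (C ∩ Set.Iio α)) else false) ∧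
    ∀ η ξ : Ordinal → Bool,
      E0 κ η ξ ↔
        (EStar S (fun α => if α ∈ C then η (otp (C ∩ Set.Iio α)) else false)
            (fun α => if α ∈ C then ξ (otp (C ∩ Set.Iio α)) else false) ∧
          E0 κ (fun α => if α ∈ C then η (otp (C ∩ Set.Iio α)) else false)
            (fun α => if α ∈ C then ξ (otp (C ∩ Set.Iio α)) else false)) :=
  E0_reducible_to_ES_of_nonstationary_general κ hreg S hS C hC hCS
end
end

section
/- Let λ > ω be regular, κ = λ^+, and suppose ⟨C_α : α ∈ S^κ_{≤λ}⟩ is a □_λ-sequence (C_α club in α; C_β = β ∩ C_α for β ∈ lim C_α; |C_α| < λ when cf(α) < λ). Define D_α = {C_α ∩ β : β < α} for each α < κ. Then the sequence ⟨D_α : α < κ⟩ witnesses that S^κ_λ belongs to the ideal I[κ]: |D_α| < κ for all α, and for every α ∈ S^κ_λ the set E = C_α is unbounded in α of order type cf(α) = λ, and for every β < α there is γ < α with E ∩ β ∈ D_γ. -/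
open Cardinal Set
open scoped Classical

noncomputable section

/-- The set of (nonzero) limit points of a set of ordinals. -/
def limPts (C : Set Ordinal) : Set Ordinal :=
  {β | β ≠ 0 ∧ ∀ γ < β, ∃ ε ∈ C, γ < ε ∧ ε < β}

/-! For `cf α = λ > ω`, the limit points of `C_α` of countable cofinality are unbounded in `α`.
At such a `γ` coherence gives `C_α ∩ γ = C_γ`, which has fewer than `λ` elements and lies in
`D_γ`. So every proper initial segment of `C_α` is small, which forces `otp C_α = λ`, and each
`C_α ∩ β` is `C_γ ∩ β ∈ D_γ` for such a `γ > β`. The bound `|D_α| ≤ |α| < κ` is immediate. -/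

universe u

theorem mk_initialSegments_le (C : Set Ordinal.{u}) (α : Ordinal.{u}) :
    #{s : Set Ordinal | ∃ β < α, s = C ∩ Iio β} ≤ Cardinal.lift.{u + 1} α.card := by
  rw [← Cardinal.mk_Iio_ordinal]
  refine mk_le_of_surjective (f := fun β : Iio α => ⟨C ∩ Iio β.1, β.1, β.2, rfl⟩) ?_
  rintro ⟨s, β, hβ, rfl⟩
  exact ⟨⟨β, hβ⟩, rfl⟩

theorem isSuccLimit_of_mem_limPts {C : Set Ordinal} {γ : Ordinal} (hγ : γ ∈ limPts C) :
    Order.IsSuccLimit γ := by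
  refine Ordinal.isSuccLimit_iff.2 ⟨hγ.1, Order.isSuccPrelimit_iff_succ_lt.2 fun a ha => ?_⟩
  obtain ⟨ε, -, haε, hεγ⟩ := hγ.2 a ha
  exact (Order.succ_le_of_lt haε).trans_lt hεγ

theorem iSup_mem_limPts {C : Set Ordinal} {g : ℕ → Ordinal} (hmono : ∀ n, g n < g (n + 1))
    (hmem : ∀ n, g (n + 1) ∈ C) : ⨆ n, g n ∈ limPts C := by
  have hlt : ∀ n, g n < ⨆ n, g n := fun n => (hmono n).trans_le (Ordinal.le_iSup g (n + 1))
  refine ⟨(hlt 0).ne_bot, fun δ hδ => ?_⟩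
  obtain ⟨n, hn⟩ := Ordinal.lt_iSup_iff.1 hδ
  exact ⟨g (n + 1), hmem n, hn.trans (hmono n), hlt (n + 1)⟩

/-- The witness is the supremum of an `ω`-sequence through `C`; it stays below `α` because
`cf α > ω`. -/
theorem exists_mem_limPts_cof_le_aleph0 {C : Set Ordinal} {α : Ordinal} (hsub : C ⊆ Iio α)
    (hunb : ∀ β < α, ∃ γ ∈ C, β < γ) (hα : ℵ₀ < α.cof) {β : Ordinal} (hβ : β < α) :
    ∃ γ ∈ limPts C, β < γ ∧ γ < α ∧ γ.cof ≤ ℵ₀ := by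
  have step : ∀ δ < α, ∃ ε, ε ∈ C ∧ δ < ε ∧ ε < α := fun δ hδ => by
    obtain ⟨ε, hε, hδε⟩ := hunb δ hδ
    exact ⟨ε, hε, hδε, hsub hε⟩
  choose! nxt hnxt using step
  set g : ℕ → Ordinal := fun n => nxt^[n] β
  have hg_succ : ∀ n, g (n + 1) = nxt (g n) := fun n => Function.iterate_succ_apply' nxt n β
  have hg_lt : ∀ n, g n < α := by
    intro n
    induction n with
    | zero => exact hβ
    | succ n ih => exact hg_succ n ▸ (hnxt _ ih).2.2
  have hmono : ∀ n, g n < g (n + 1) := fun n => hg_succ n ▸ (hnxt _ (hg_lt n)).2.1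
  have hlt : ∀ n, g n < ⨆ n, g n := fun n => (hmono n).trans_le (Ordinal.le_iSup g (n + 1))
  refine ⟨⨆ n, g n, iSup_mem_limPts hmono fun n => hg_succ n ▸ (hnxt _ (hg_lt n)).1, hlt 0,
    Ordinal.lift_iSup_lt_of_lt_cof (by simpa using hα) hg_lt, ?_⟩
  by_contra! h
  exact (Ordinal.lift_iSup_lt_of_lt_cof (by simpa using h) hlt).false

theorem lift_cof_le_mk_of_unbounded {C : Set Ordinal.{u}} {α : Ordinal.{u}} (hsub : C ⊆ Iio α)
    (hunb : ∀ β < α, ∃ γ ∈ C, β < γ) : Cardinal.lift.{u + 1} α.cof ≤ #C := by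
  have hcofinal : IsCofinal {x : Iio α | x.1 ∈ C} := fun x => by
    obtain ⟨γ, hγ, hxγ⟩ := hunb x.1 x.2
    exact ⟨⟨γ, hsub hγ⟩, hγ, hxγ.le⟩
  calc Cardinal.lift α.cof = Order.cof (Iio α) := by rw [Ordinal.cof_Iio, Ordinal.lift_cof]
    _ ≤ #{x : Iio α | x.1 ∈ C} := Order.cof_le hcofinal
    _ ≤ #C := mk_le_of_injective (f := fun x => ⟨x.1.1, x.2⟩) fun x y h => by
      ext; simpa using congrArg Subtype.val h

theorem type_subrel_le_ord {C : Set Ordinal.{u}} {c : Cardinal.{u}}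
    (hsmall : ∀ x ∈ C, #↥(C ∩ Iio x) < Cardinal.lift.{u + 1} c) :
    Ordinal.type (Subrel ((· < ·) : Ordinal → Ordinal → Prop) (· ∈ C)) ≤
      Ordinal.lift.{u + 1} c.ord := by
  by_contra! h
  obtain ⟨x, hx⟩ := Ordinal.typein_surj _ h
  have hcard := congrArg Ordinal.card hx
  rw [Ordinal.card_typein, Cardinal.lift_ord, card_ord] at hcard
  refine (hsmall x.1 x.2).not_ge (hcard ▸ mk_le_of_injective (f := fun y => ⟨y.1.1, y.1.2, y.2⟩)
    fun y z h => ?_)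
  ext; simpa using congrArg Subtype.val h

theorem otp_eq_of_type_eq {s : Set Ordinal} {o : Ordinal}
    (h : Ordinal.type (Subrel ((· < ·) : Ordinal → Ordinal → Prop) (· ∈ s)) = Ordinal.lift o) :
    otp s = o := by
  have hset : {o' : Ordinal | Ordinal.lift.{1, 0} o' =
      Ordinal.type (Subrel ((· < ·) : Ordinal → Ordinal → Prop) (· ∈ s))} = {o} := by
    ext o'
    simp [h]
  rw [otp, hset, csInf_singleton]

theorem otp_eq_ord_cof {C : Set Ordinal} {α : Ordinal} (hsub : C ⊆ Iio α)
    (hunb : ∀ β < α, ∃ γ ∈ C, β < γ) (hsmall : ∀ x ∈ C, #↥(C ∩ Iio x) < Cardinal.lift α.cof) :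
    otp C = α.cof.ord := by
  refine otp_eq_of_type_eq (le_antisymm (type_subrel_le_ord hsmall) ?_)
  rw [Cardinal.lift_ord, ord_le, Ordinal.card_type]
  exact lift_cof_le_mk_of_unbounded hsub hunb

theorem square_witnesses_approachability_general (lam κ : Cardinal)
    (hunc : ℵ₀ < lam)
    (C : Ordinal → Set Ordinal)
    (hclub : ∀ α, α < κ.ord → Order.IsSuccLimit α → α.cof ≤ lam → IsClubIn (C α) α)
    (hcoh : ∀ α, α < κ.ord → Order.IsSuccLimit α → α.cof ≤ lam →
      ∀ β ∈ limPts (C α), C β = C α ∩ Set.Iio β)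
    (hsize : ∀ α, α < κ.ord → Order.IsSuccLimit α → α.cof < lam →
      Cardinal.mk ↥(C α) < Cardinal.lift.{1, 0} lam) :
    (∀ α < κ.ord,
      Cardinal.mk ↥{s : Set Ordinal | ∃ β < α, s = C α ∩ Set.Iio β} <
        Cardinal.lift.{1, 0} κ) ∧
    ∀ α, α < κ.ord → α.cof = lam →
      (∀ β < α, ∃ γ ∈ C α, β < γ) ∧ otp (C α) = lam.ord ∧
        ∀ β < α, ∃ γ < α, C α ∩ Set.Iio β ∈
          {s : Set Ordinal | ∃ δ < γ, s = C γ ∩ Set.Iio δ} := by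
  refine ⟨fun α hα => (mk_initialSegments_le (C α) α).trans_lt (lift_lt.2 (lt_ord.1 hα)),
    fun α hα hcof => ?_⟩
  have hαlim : Order.IsSuccLimit α := Ordinal.one_lt_cof_iff.1 (hcof ▸ one_lt_aleph0.trans hunc)
  obtain ⟨hsub, hunb, -⟩ := hclub α hα hαlim hcof.le
  have hcohα := hcoh α hα hαlim hcof.le
  have hlim : ∀ β < α, ∃ γ ∈ limPts (C α), β < γ ∧ γ < α ∧ γ.cof < lam := fun β hβ => by
    obtain ⟨γ, hγ, hβγ, hγα, hγcof⟩ :=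
      exists_mem_limPts_cof_le_aleph0 hsub hunb (hcof ▸ hunc) hβ
    exact ⟨γ, hγ, hβγ, hγα, hγcof.trans_lt hunc⟩
  have hsmall : ∀ x ∈ C α, #↥(C α ∩ Iio x) < Cardinal.lift lam := fun x hx => by
    obtain ⟨γ, hγ, hxγ, hγα, hγcof⟩ := hlim x (hsub hx)
    have hCγ := hsize γ (hγα.trans hα) (isSuccLimit_of_mem_limPts hγ) hγcof
    rw [hcohα γ hγ] at hCγ
    exact (mk_le_mk_of_subset (inter_subset_inter_right _ (Iio_subset_Iio hxγ.le))).trans_lt hCγ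
  refine ⟨hunb, hcof ▸ otp_eq_ord_cof hsub hunb (hcof ▸ hsmall), fun β hβ => ?_⟩
  obtain ⟨γ, hγ, hβγ, hγα, -⟩ := hlim β hβ
  refine ⟨γ, hγα, β, hβγ, ?_⟩
  rw [hcohα γ hγ, inter_assoc, Iio_inter_Iio, min_eq_right hβγ.le]

/-- from a `□_λ`-sequence on `κ = λ⁺` (`λ > ω` regular), the sets
`D_α = {C_α ∩ β | β < α}` witness `S^κ_λ ∈ I[κ]`: each `|D_α| < κ`, and for every
`α ∈ S^κ_λ` the set `E = C_α` is unbounded in `α`, has order type `λ = cf(α)`, and all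
its proper initial segments appear in some `D_γ`, `γ < α`. -/
theorem square_witnesses_approachability (lam κ : Cardinal) (hlam : lam.IsRegular)
    (hunc : ℵ₀ < lam) (hκ : κ = Order.succ lam)
    (C : Ordinal → Set Ordinal)
    (hclub : ∀ α, α < κ.ord → Order.IsSuccLimit α → α.cof ≤ lam → IsClubIn (C α) α)
    (hcoh : ∀ α, α < κ.ord → Order.IsSuccLimit α → α.cof ≤ lam →
      ∀ β ∈ limPts (C α), C β = C α ∩ Set.Iio β)
    (hsize : ∀ α, α < κ.ord → Order.IsSuccLimit α → α.cof < lam →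
      Cardinal.mk ↥(C α) < Cardinal.lift.{1, 0} lam) :
    (∀ α < κ.ord,
      Cardinal.mk ↥{s : Set Ordinal | ∃ β < α, s = C α ∩ Set.Iio β} <
        Cardinal.lift.{1, 0} κ) ∧
    ∀ α, α < κ.ord → α.cof = lam →
      (∀ β < α, ∃ γ ∈ C α, β < γ) ∧ otp (C α) = lam.ord ∧
        ∀ β < α, ∃ γ < α, C α ∩ Set.Iio β ∈
          {s : Set Ordinal | ∃ δ < γ, s = C γ ∩ Set.Iio δ} :=
  square_witnesses_approachability_general lam κ hunc C hclub hcoh hsize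
end
end
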